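/- arXiv:2002.03077 — 3 statements merged into one kernel-verified Lean document; each statement's English description precedes it below -/
import Mathlib

section
/- Let 𝓡 = (R, <, …) be a densely linearly ordered structure. Let X ⊆ R^n be a D_Σ-set of dimension d and let x ∈ R^n be a point with dim_x X = d. Then dim(X ∩ B) = proj.dim(X ∩ B) = d for every sufficiently small open box B in R^n containing x. -/
open FirstOrder Set Topology

section CommonDefs

/-- A subset of `R^n` (coded as `Fin n → R`) is definable in the structure `𝓡` (with
universe `R` and language `L`) with parameters. -/
def IsDefinable (L : FirstOrder.Language) {R : Type*} [L.Structure R] {n : ℕ}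
    (X : Set (Fin n → R)) : Prop :=
  Set.Definable (Set.univ : Set R) L X

/-- An open box in `R^n`: a product of `n` open intervals. -/
def OpenBox {R : Type*} [LT R] {n : ℕ} (B : Set (Fin n → R)) : Prop :=
  ∃ c d : Fin n → R, B = {x | ∀ i, c i < x i ∧ x i < d i}

/-- A closed box in `R^n`: a product of `n` closed intervals. -/
def ClosedBox {R : Type*} [LE R] {n : ℕ} (B : Set (Fin n → R)) : Prop :=
  ∃ c d : Fin n → R, B = {x | ∀ i, c i ≤ x i ∧ x i ≤ d i}

/-- A subset of `R` which is a finite union of points and open intervals. -/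
def FinUnionPtsIntervals {R : Type*} [Preorder R] (s : Set R) : Prop :=
  ∃ (P : Finset R) (Q : Finset (R × R)), s = ↑P ∪ ⋃ p ∈ Q, Set.Ioo p.1 p.2

/-- The fiber `X_x ⊆ R` of a set `X ⊆ R^{m+1}` over `x ∈ R^m`. -/
def fiber1 {R : Type*} {m : ℕ} (X : Set (Fin (m + 1) → R)) (x : Fin m → R) : Set R :=
  {y | Fin.snoc x y ∈ X}

/-- The fiber `X_x ⊆ R^n` of a set `X ⊆ R^{m+n}` over `x ∈ R^m`. -/
def fiberN {R : Type*} {m n : ℕ} (X : Set (Fin (m + n) → R)) (x : Fin m → R) :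
    Set (Fin n → R) :=
  {y | Fin.append x y ∈ X}

/-- The member `X_{r,s} ⊆ R^n` of a parameterized family coded by `F ⊆ R^{2+n}`. -/
def famFiber {R : Type*} {n : ℕ} (F : Set (Fin (2 + n) → R)) (r s : R) : Set (Fin n → R) :=
  {y | Fin.append ![r, s] y ∈ F}

/-- A bounded subset of `R^n`: contained in some closed box. -/
def BddSet {R : Type*} [LE R] {n : ℕ} (X : Set (Fin n → R)) : Prop :=
  ∃ c d : R, ∀ y ∈ X, ∀ i, c ≤ y i ∧ y i ≤ d

/-- A discrete subset of a topological space: each of its points is isolated. -/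
def DiscreteSet {α : Type*} [TopologicalSpace α] (S : Set α) : Prop :=
  ∀ y ∈ S, ∃ U : Set α, IsOpen U ∧ y ∈ U ∧ U ∩ S = {y}

/-- A locally finite subset: each point of the space has an open neighborhood meeting
the set in a finite set. -/
def LocFin {α : Type*} [TopologicalSpace α] (S : Set α) : Prop :=
  ∀ x : α, ∃ U : Set α, IsOpen U ∧ x ∈ U ∧ (S ∩ U).Finite

/-- `F ⊆ R^{2+n}` codes a `D_Σ`-family `{X_{r,s}}_{r>0,s>0}` of CBD subsets of `R^n`:
each fiber is closed, bounded and definable, the family is increasing in `r` and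
decreasing in `s`. -/
def IsDSigmaFamily (L : FirstOrder.Language) {R : Type*} [L.Structure R] [LinearOrder R]
    [Zero R] [TopologicalSpace R] {n : ℕ} (F : Set (Fin (2 + n) → R)) : Prop :=
  IsDefinable L F ∧
    (∀ r s : R, 0 < r → 0 < s →
      IsDefinable L (famFiber F r s) ∧ IsClosed (famFiber F r s) ∧ BddSet (famFiber F r s)) ∧
    (∀ r r' s : R, 0 < r → 0 < s → r ≤ r' → famFiber F r s ⊆ famFiber F r' s) ∧
    (∀ r s s' : R, 0 < r → 0 < s → s ≤ s' → famFiber F r s' ⊆ famFiber F r s)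

/-- A `D_Σ`-set: the union `⋃_{r>0,s>0} X_{r,s}` of a `D_Σ`-family. -/
def IsDSigma (L : FirstOrder.Language) {R : Type*} [L.Structure R] [LinearOrder R]
    [Zero R] [TopologicalSpace R] {n : ℕ} (X : Set (Fin n → R)) : Prop :=
  ∃ F : Set (Fin (2 + n) → R), IsDSigmaFamily L F ∧
    X = ⋃ (r : R) (_ : 0 < r) (s : R) (_ : 0 < s), famFiber F r s

/-- Constructible sets: finite boolean combinations of open sets. -/
inductive IsConstructibleSet {α : Type*} [TopologicalSpace α] : Set α → Prop
  | of_isOpen (s : Set α) : IsOpen s → IsConstructibleSet s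
  | compl (s : Set α) : IsConstructibleSet s → IsConstructibleSet sᶜ
  | union (s t : Set α) : IsConstructibleSet s → IsConstructibleSet t →
      IsConstructibleSet (s ∪ t)

/-- `𝓡 ⊨ DC`: every nonempty definable subset of `R` bounded above has a supremum. -/
def DCProp (L : FirstOrder.Language) (R : Type*) [L.Structure R] [Preorder R] : Prop :=
  ∀ s : Set R, IsDefinable L {v : Fin 1 → R | v 0 ∈ s} → s.Nonempty → BddAbove s →
    ∃ a : R, IsLUB s a

/-- `𝓡 ⊨ LUF₂` (locally uniform finiteness of the second kind). -/
def LUF2 (L : FirstOrder.Language) (R : Type*) [L.Structure R] [LinearOrder R]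
    [TopologicalSpace R] : Prop :=
  ∀ (m : ℕ) (X : Set (Fin (m + 1) → R)), IsDefinable L X → ∀ (a : R) (b : Fin m → R),
    ∃ N : ℕ, 0 < N ∧ ∃ p q : R, a ∈ interior (Set.Icc p q) ∧
      ∃ U : Set (Fin m → R), OpenBox U ∧ b ∈ U ∧
        ∀ x ∈ U, ∀ p' q' : R, a ∈ interior (Set.Icc p' q') → Set.Icc p' q' ⊆ Set.Icc p q →
          (fiber1 X x ∩ Set.Icc p' q').Infinite ∨ (fiber1 X x ∩ Set.Icc p' q').ncard ≤ N

/-- `𝓡 ⊨ LUF₁`: `LUF₂` with `U` always taken to be all of `R^m`. -/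
def LUF1 (L : FirstOrder.Language) (R : Type*) [L.Structure R] [LinearOrder R]
    [TopologicalSpace R] : Prop :=
  ∀ (m : ℕ) (X : Set (Fin (m + 1) → R)), IsDefinable L X → ∀ a : R,
    ∃ N : ℕ, 0 < N ∧ ∃ p q : R, a ∈ interior (Set.Icc p q) ∧
      ∀ (x : Fin m → R), ∀ p' q' : R,
        a ∈ interior (Set.Icc p' q') → Set.Icc p' q' ⊆ Set.Icc p q →
          (fiber1 X x ∩ Set.Icc p' q').Infinite ∨ (fiber1 X x ∩ Set.Icc p' q').ncard ≤ N

/-- `𝓡 ⊨ SLUF`: `LUF₁` with the interval `I` chosen independently of the definable set. -/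
def SLUF (L : FirstOrder.Language) (R : Type*) [L.Structure R] [LinearOrder R]
    [TopologicalSpace R] : Prop :=
  ∀ a : R, ∃ p q : R, a ∈ interior (Set.Icc p q) ∧
    ∀ (m : ℕ) (X : Set (Fin (m + 1) → R)), IsDefinable L X →
      ∃ N : ℕ, 0 < N ∧
        ∀ (x : Fin m → R), ∀ p' q' : R,
          a ∈ interior (Set.Icc p' q') → Set.Icc p' q' ⊆ Set.Icc p q →
            (fiber1 X x ∩ Set.Icc p' q').Infinite ∨ (fiber1 X x ∩ Set.Icc p' q').ncard ≤ N

/-- The language of the open core of `𝓡`: one `n`-ary relation symbol for each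
`𝓡`-definable open subset of `R^n`. -/
def openCoreLang (L : FirstOrder.Language) (R : Type*) [L.Structure R] [TopologicalSpace R] :
    FirstOrder.Language where
  Functions := fun _ => Empty
  Relations := fun n => { s : Set (Fin n → R) // Set.Definable (Set.univ : Set R) L s ∧ IsOpen s }

/-- The open core of `𝓡`: the structure on `R` interpreting each relation symbol by the
corresponding `𝓡`-definable open set. -/
def openCoreStructure (L : FirstOrder.Language) (R : Type*) [L.Structure R]
    [TopologicalSpace R] : (openCoreLang L R).Structure R where
  funMap := fun f _ => f.elim
  RelMap := fun s x => x ∈ s.1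

/-- A set is definable in the open core of `𝓡` if it is definable (with parameters) in the
structure generated by the `𝓡`-definable open sets. -/
def DefinableInOpenCore (L : FirstOrder.Language) (R : Type*) [L.Structure R]
    [TopologicalSpace R] {n : ℕ} (X : Set (Fin n → R)) : Prop :=
  letI := openCoreStructure L R
  Set.Definable (Set.univ : Set R) (openCoreLang L R) X

/-- The local dimension `dim_x X` of `X ⊆ R^n` at `x`, an element of `{-∞} ∪ ℕ ∪ {∞}`:
the supremum of the nonnegative integers `d` such that for every open box `B` containing
`x`, some coordinate projection of `B ∩ X` to `R^d` has nonempty interior (and `-∞` if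
some open box containing `x` misses `X`). -/
noncomputable def locDim {R : Type*} [LT R] [TopologicalSpace R] {n : ℕ}
    (X : Set (Fin n → R)) (x : Fin n → R) : WithBot ℕ∞ :=
  sSup {e : WithBot ℕ∞ | ∃ d : ℕ, e = ((d : ℕ∞) : WithBot ℕ∞) ∧
    ∀ B : Set (Fin n → R), OpenBox B → x ∈ B →
      ∃ f : Fin d → Fin n, Function.Injective f ∧
        (interior ((fun y => y ∘ f) '' (B ∩ X))).Nonempty}

/-- The dimension of `X ⊆ R^n`: the supremum of the local dimensions. -/
noncomputable def setDim {R : Type*} [LT R] [TopologicalSpace R] {n : ℕ}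
    (X : Set (Fin n → R)) : WithBot ℕ∞ :=
  ⨆ x : Fin n → R, locDim X x

/-- The projective dimension of `X ⊆ R^n`: the supremum of the nonnegative integers `d`
such that some coordinate projection of `X` to `R^d` has nonempty interior (`-∞` for the
empty set). -/
noncomputable def projDim {R : Type*} [TopologicalSpace R] {n : ℕ}
    (X : Set (Fin n → R)) : WithBot ℕ∞ :=
  sSup {e : WithBot ℕ∞ | ∃ d : ℕ, e = ((d : ℕ∞) : WithBot ℕ∞) ∧
    ∃ f : Fin d → Fin n, Function.Injective f ∧
      (interior ((fun y => y ∘ f) '' X)).Nonempty}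

/-- A subset of `R` which is a union of at most `N` open intervals. -/
def UnionAtMostOpenIntervals {R : Type*} [Preorder R] (N : ℕ) (s : Set R) : Prop :=
  ∃ Q : Finset (R × R), Q.card ≤ N ∧ s = ⋃ p ∈ Q, Set.Ioo p.1 p.2

/-- A subset of `R` which is a union of at most `N₁` points and `N₂` closed intervals. -/
def UnionAtMostPtsClosedIntervals {R : Type*} [Preorder R] (N₁ N₂ : ℕ) (s : Set R) : Prop :=
  ∃ (P : Finset R) (Q : Finset (R × R)), P.card ≤ N₁ ∧ Q.card ≤ N₂ ∧
    s = ↑P ∪ ⋃ p ∈ Q, Set.Icc p.1 p.2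

/-- A subset of `R` which is a union of at most `N₁` points and `N₂` open intervals. -/
def UnionAtMostPtsOpenIntervals {R : Type*} [Preorder R] (N₁ N₂ : ℕ) (s : Set R) : Prop :=
  ∃ (P : Finset R) (Q : Finset (R × R)), P.card ≤ N₁ ∧ Q.card ≤ N₂ ∧
    s = ↑P ∪ ⋃ p ∈ Q, Set.Ioo p.1 p.2

/-- `X ∩ B` is the graph of a continuous map defined on the coordinate-projection image
of `B` (the projection being given by the injection `f` of coordinates). -/
def IsGraphOn {R : Type*} [TopologicalSpace R] {n d : ℕ} (f : Fin d → Fin n)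
    (S : Set (Fin n → R)) (D : Set (Fin d → R)) : Prop :=
  ∃ g : (Fin d → R) → (Fin n → R), ContinuousOn g D ∧ (∀ z ∈ D, (g z) ∘ f = z) ∧ S = g '' D

end CommonDefs

/-!
Since `dim_x X = d`, every box around `x` meets `X` in a set having a coordinate projection
to `R^d` with interior, while some box `B₀ ∋ x` admits no such projection to `R^{d+1}`; this
pins `proj.dim (X ∩ B)` to `d` for boxes `x ∈ B ⊆ B₀`. As local dimension only sees small
boxes, `dim_x (X ∩ B) = dim_x X = d`, and `dim (X ∩ B) ≤ dim X = d` by monotonicity.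
-/

open Function

section ProjHasInterior

variable {R : Type*} [TopologicalSpace R]

theorem isOpenMap_comp_of_injective {ι κ : Type*} {g : κ → ι} (hg : Injective g) :
    IsOpenMap (fun w : ι → R => w ∘ g) := by
  classical
  refine IsOpenMap.of_sections fun w =>
    ⟨fun z => extend g z w, ?_, ?_, fun z => extend_comp hg z w⟩
  · refine (continuous_pi fun i => ?_).continuousAt
    by_cases hi : ∃ k, g k = i
    · simpa only [extend_def, dif_pos hi] using continuous_apply hi.choose
    · simpa only [extend_apply' _ _ _ hi] using continuous_const
  · funext i
    by_cases hi : ∃ k, g k = i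
    · obtain ⟨k, rfl⟩ := hi
      exact hg.extend_apply _ _ k
    · exact extend_apply' _ _ _ hi

variable {n : ℕ}

def ProjHasInterior (X : Set (Fin n → R)) (e : ℕ) : Prop :=
  ∃ f : Fin e → Fin n, Injective f ∧ (interior ((fun y => y ∘ f) '' X)).Nonempty

theorem ProjHasInterior.mono {X Y : Set (Fin n → R)} {e : ℕ} (h : ProjHasInterior X e)
    (hXY : X ⊆ Y) : ProjHasInterior Y e := by
  obtain ⟨f, hf, hne⟩ := h
  exact ⟨f, hf, hne.mono (interior_mono (image_mono hXY))⟩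

theorem ProjHasInterior.of_le {X : Set (Fin n → R)} {e e' : ℕ} (h : ProjHasInterior X e')
    (he : e ≤ e') : ProjHasInterior X e := by
  obtain ⟨f, hf, hne⟩ := h
  have hproj : (fun y => y ∘ (f ∘ Fin.castLE he)) '' X =
      (fun w => w ∘ Fin.castLE he) '' ((fun y => y ∘ f) '' X) := by
    rw [image_image]; rfl
  refine ⟨f ∘ Fin.castLE he, hf.comp (Fin.castLE_injective he), ?_⟩
  rw [hproj]
  exact (hne.image _).mono
    ((isOpenMap_comp_of_injective (Fin.castLE_injective he)).image_interior_subset _)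

theorem antitone_projHasInterior (X : Set (Fin n → R)) : Antitone (ProjHasInterior X) :=
  fun _ _ he h => h.of_le he

end ProjHasInterior

theorem sSup_natCast_eq_iff {P : ℕ → Prop} (hP : Antitone P) (d : ℕ) :
    sSup {e : WithBot ℕ∞ | ∃ k : ℕ, e = ((k : ℕ∞) : WithBot ℕ∞) ∧ P k} =
        ((d : ℕ∞) : WithBot ℕ∞) ↔ P d ∧ ¬ P (d + 1) := by
  set S := {e : WithBot ℕ∞ | ∃ k : ℕ, e = ((k : ℕ∞) : WithBot ℕ∞) ∧ P k}
  have le_sSup_of : ∀ k, P k → ((k : ℕ∞) : WithBot ℕ∞) ≤ sSup S :=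
    fun k hk => le_sSup ⟨k, rfl, hk⟩
  have sSup_le_of : ∀ k, ¬ P (k + 1) → sSup S ≤ ((k : ℕ∞) : WithBot ℕ∞) := by
    refine fun k hk => sSup_le ?_
    rintro _ ⟨j, rfl, hj⟩
    have : j ≤ k := by_contra fun hjk => hk (hP (not_le.1 hjk) hj)
    exact_mod_cast this
  constructor
  · intro h
    refine ⟨by_contra fun hd => ?_, fun hd => ?_⟩
    · cases d with
      | zero =>
        have : sSup S ≤ ⊥ := sSup_le fun _ ⟨j, _, hj⟩ => absurd (hP (Nat.zero_le j) hj) hd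
        simp [h] at this
      | succ k =>
        have := h ▸ sSup_le_of k hd
        exact absurd (by exact_mod_cast this : k + 1 ≤ k) (Nat.not_succ_le_self k)
    · have := h ▸ le_sSup_of (d + 1) hd
      exact absurd (by exact_mod_cast this : d + 1 ≤ d) (Nat.not_succ_le_self d)
  · rintro ⟨hd, hd1⟩
    exact le_antisymm (sSup_le_of d hd1) (le_sSup_of d hd)

section LocalDimension

variable {R : Type*} [TopologicalSpace R] {n : ℕ}

theorem projDim_eq_natCast_iff (X : Set (Fin n → R)) (d : ℕ) :
    projDim X = ((d : ℕ∞) : WithBot ℕ∞) ↔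
      ProjHasInterior X d ∧ ¬ ProjHasInterior X (d + 1) :=
  sSup_natCast_eq_iff (antitone_projHasInterior X) d

variable [LT R]

theorem locDim_def (X : Set (Fin n → R)) (x : Fin n → R) :
    locDim X x = sSup {e : WithBot ℕ∞ | ∃ k : ℕ, e = ((k : ℕ∞) : WithBot ℕ∞) ∧
      ∀ B, OpenBox B → x ∈ B → ProjHasInterior (B ∩ X) k} :=
  rfl

theorem locDim_eq_natCast_iff (X : Set (Fin n → R)) (x : Fin n → R) (d : ℕ) :
    locDim X x = ((d : ℕ∞) : WithBot ℕ∞) ↔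
      (∀ B, OpenBox B → x ∈ B → ProjHasInterior (B ∩ X) d) ∧
        ∃ B, OpenBox B ∧ x ∈ B ∧ ¬ ProjHasInterior (B ∩ X) (d + 1) := by
  have hP : Antitone fun k => ∀ B, OpenBox B → x ∈ B → ProjHasInterior (B ∩ X) k :=
    fun _ _ he h B hB hxB => (h B hB hxB).of_le he
  rw [locDim_def]
  simpa only [not_forall, exists_prop] using sSup_natCast_eq_iff hP d

theorem locDim_mono {X Y : Set (Fin n → R)} (hXY : X ⊆ Y) (x : Fin n → R) :
    locDim X x ≤ locDim Y x := by
  rw [locDim_def, locDim_def]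
  refine sSup_le_sSup ?_
  rintro _ ⟨k, rfl, hk⟩
  exact ⟨k, rfl, fun B hB hxB => (hk B hB hxB).mono (inter_subset_inter_right B hXY)⟩

theorem setDim_mono {X Y : Set (Fin n → R)} (hXY : X ⊆ Y) : setDim X ≤ setDim Y :=
  iSup_mono fun x => locDim_mono hXY x

end LocalDimension

section LinearOrder

variable {R : Type*} [LinearOrder R] {n : ℕ}

theorem OpenBox.inter {B B' : Set (Fin n → R)} (hB : OpenBox B) (hB' : OpenBox B') :
    OpenBox (B ∩ B') := by
  obtain ⟨c, e, rfl⟩ := hB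
  obtain ⟨c', e', rfl⟩ := hB'
  refine ⟨fun i => max (c i) (c' i), fun i => min (e i) (e' i), ?_⟩
  ext z
  simp only [mem_inter_iff, mem_ofPred_eq, max_lt_iff, lt_min_iff]
  exact ⟨fun ⟨h, h'⟩ i => ⟨⟨(h i).1, (h' i).1⟩, (h i).2, (h' i).2⟩,
    fun h => ⟨fun i => ⟨(h i).1.1, (h i).2.1⟩, fun i => ⟨(h i).1.2, (h i).2.2⟩⟩⟩

theorem locDim_inter_openBox [TopologicalSpace R] {X B : Set (Fin n → R)} {x : Fin n → R}
    (hB : OpenBox B) (hxB : x ∈ B) : locDim (X ∩ B) x = locDim X x := by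
  refine le_antisymm (locDim_mono inter_subset_left x) ?_
  rw [locDim_def, locDim_def]
  refine sSup_le_sSup ?_
  rintro _ ⟨k, rfl, hk⟩
  refine ⟨k, rfl, fun B' hB' hxB' => ?_⟩
  exact (hk (B' ∩ B) (hB'.inter hB) ⟨hxB', hxB⟩).mono
    fun y ⟨⟨hyB', hyB⟩, hyX⟩ => ⟨hyB', hyX, hyB⟩

end LinearOrder

theorem dim_eq_projDim_on_small_boxes_general
    {R : Type*}
    [LinearOrder R] [TopologicalSpace R]
    {n d : ℕ} (X : Set (Fin n → R))
    (hdim : setDim X = ((d : ℕ∞) : WithBot ℕ∞))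
    (x : Fin n → R) (hx : locDim X x = ((d : ℕ∞) : WithBot ℕ∞)) :
    ∃ B₀ : Set (Fin n → R), OpenBox B₀ ∧ x ∈ B₀ ∧
      ∀ B : Set (Fin n → R), OpenBox B → x ∈ B → B ⊆ B₀ →
        setDim (X ∩ B) = ((d : ℕ∞) : WithBot ℕ∞) ∧
        projDim (X ∩ B) = ((d : ℕ∞) : WithBot ℕ∞) := by
  obtain ⟨hsmall, B₀, hB₀, hxB₀, hB₀d⟩ := (locDim_eq_natCast_iff X x d).1 hx
  refine ⟨B₀, hB₀, hxB₀, fun B hB hxB hBB₀ => ⟨?_, ?_⟩⟩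
  · refine le_antisymm ((setDim_mono inter_subset_left).trans hdim.le) ?_
    calc ((d : ℕ∞) : WithBot ℕ∞) = locDim (X ∩ B) x := by
          rw [locDim_inter_openBox hB hxB, hx]
      _ ≤ setDim (X ∩ B) := le_iSup (locDim (X ∩ B)) x
  · refine (projDim_eq_natCast_iff (X ∩ B) d).2 ⟨?_, fun h => hB₀d ?_⟩
    · exact (hsmall B hB hxB).mono (inter_comm B X).le
    · exact h.mono fun y ⟨hyX, hyB⟩ => ⟨hBB₀ hyB, hyX⟩

/-- Let `𝓡` be a densely linearly ordered structure, `X ⊆ R^n` a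
`D_Σ`-set of dimension `d` and `x` a point with `dim_x X = d`. Then
`dim (X ∩ B) = proj.dim (X ∩ B) = d` for every sufficiently small open box `B ∋ x`. -/
theorem dim_eq_projDim_on_small_boxes
    {R : Type*} (L : FirstOrder.Language) [L.Structure R]
    [LinearOrder R] [DenselyOrdered R] [Zero R] [TopologicalSpace R] [OrderTopology R]
    (hlt : IsDefinable L {v : Fin 2 → R | v 0 < v 1})
    {n d : ℕ} (X : Set (Fin n → R)) (hX : IsDSigma L X)
    (hdim : setDim X = ((d : ℕ∞) : WithBot ℕ∞))
    (x : Fin n → R) (hx : locDim X x = ((d : ℕ∞) : WithBot ℕ∞)) :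
    ∃ B₀ : Set (Fin n → R), OpenBox B₀ ∧ x ∈ B₀ ∧
      ∀ B : Set (Fin n → R), OpenBox B → x ∈ B → B ⊆ B₀ →
        setDim (X ∩ B) = ((d : ℕ∞) : WithBot ℕ∞) ∧
        projDim (X ∩ B) = ((d : ℕ∞) : WithBot ℕ∞) :=
  dim_eq_projDim_on_small_boxes_general X hdim x hx
end

section
/- Let 𝓡 = (R, <, +, 0, …) be an expansion of a densely linearly ordered abelian group with 𝓡 ⊨ DC. A CBD set X ⊆ R^{n+1} has nonempty interior if, for some s > 0, the CBD set {x ∈ R^n : the fiber X_x contains a closed interval of length s} has nonempty interior. -/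
open FirstOrder Set Topology

/-!
Write `X` as `G ⊆ Rⁿ × R`, all of whose fibers lie in `[c, d]`, and let
`C u = fiberIntervalLocus G s c u` be the set of `x` whose fiber contains some `[t, t + s]` with
`c ≤ t ≤ u`. Each `C u` is closed, by a tube lemma over `[c, u]` whose supremum argument is
licensed by definable completeness. By definable completeness again,
`u₀ = inf {u | C u has interior}` exists. For `u' < u₀ < u''` with `u'' < u' + s`, the closed set
`C u'` has empty interior, so the open set `interior (C u'') \ C u'` is nonempty; each fiber over it
contains an interval `[t, t + s]` with `u' < t ≤ u''`, hence contains `(u'', u' + s)`. The product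
of these two open sets lies in `G`.
-/

open Filter

section DefinableCalculus

variable {M : Type*} {L : FirstOrder.Language} [L.Structure M] {A : Set M} {α β : Type*}

theorem definable_ofPred_and {p q : (α → M) → Prop} (hp : A.Definable L {v | p v})
    (hq : A.Definable L {v | q v}) : A.Definable L {v | p v ∧ q v} :=
  hp.inter hq

theorem definable_ofPred_imp {p q : (α → M) → Prop} (hp : A.Definable L {v | p v})
    (hq : A.Definable L {v | q v}) : A.Definable L {v | p v → q v} := by
  simp only [imp_iff_not_or]
  exact hp.compl.union hq

theorem definable_ofPred_forall_of_finite {ι : Type*} [Finite ι] {p : ι → (α → M) → Prop}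
    (hp : ∀ i, A.Definable L {v | p i v}) : A.Definable L {v | ∀ i, p i v} := by
  rw [ofPred_forall]
  exact definable_iInter_of_finite hp

theorem definable_ofPred_exists_tuple [Finite β] {p : (α → M) → (β → M) → Prop}
    (hp : A.Definable L {w : α ⊕ β → M | p (fun a => w (.inl a)) (fun b => w (.inr b))}) :
    A.Definable L {v | ∃ u, p v u} :=
  hp.exists_of_finite

theorem definable_ofPred_forall_tuple [Finite β] {p : (α → M) → (β → M) → Prop}
    (hp : A.Definable L {w : α ⊕ β → M | p (fun a => w (.inl a)) (fun b => w (.inr b))}) :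
    A.Definable L {v | ∀ u, p v u} :=
  hp.forall_of_finite

theorem definable_ofPred_exists {p : (α → M) → M → Prop}
    (hp : A.Definable L {w : α ⊕ Unit → M | p (fun a => w (.inl a)) (w (.inr ()))}) :
    A.Definable L {v | ∃ y, p v y} := by
  simpa [← (Equiv.funUnique Unit M).exists_congr_right] using definable_ofPred_exists_tuple hp

theorem definable_ofPred_forall {p : (α → M) → M → Prop}
    (hp : A.Definable L {w : α ⊕ Unit → M | p (fun a => w (.inl a)) (w (.inr ()))}) :
    A.Definable L {v | ∀ y, p v y} := by
  simpa [← (Equiv.funUnique Unit M).forall_congr_right] using definable_ofPred_forall_tuple hp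

theorem definable_ofPred_sumElim [Finite β] {p : (α ⊕ β → M) → Prop}
    (hp : (univ : Set M).Definable L {w | p w}) (x : β → M) :
    (univ : Set M).Definable L {v | p (Sum.elim v x)} := by
  have hx : (univ : Set M).Definable L {w : α ⊕ β → M | (∀ b, w (.inr b) = x b) ∧ p w} :=
    definable_ofPred_and (definable_ofPred_forall_of_finite fun b =>
      DefinableFun.ofPred_eq_const (DefinableFun.proj L) (mem_univ (x b))) hp
  convert hx.exists_of_finite using 1
  ext v
  simp [← funext_iff]

theorem definable_ofPred_snoc_mem {n : ℕ} {X : Set (Fin (n + 1) → M)} (hX : A.Definable L X)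
    (f : Fin n → α) (j : α) : A.Definable L {w | Fin.snoc (fun i => w (f i)) (w j) ∈ X} := by
  convert hX.preimage_comp (Fin.snoc f j) using 1
  ext w
  simp only [mem_ofPred_eq, mem_preimage, Fin.comp_snoc]
  rfl

variable {f g : (α → M) → M}

theorem definable_ofPred_lt [LT M] (hlt : A.Definable L {v : Fin 2 → M | v 0 < v 1})
    (hf : A.DefinableFun L f) (hg : A.DefinableFun L g) : A.Definable L {v | f v < g v} :=
  hlt.preimage_map (F := fun v => ![f v, g v]) (by simp [DefinableMap, Fin.forall_fin_two, *])

theorem definable_ofPred_le [LinearOrder M] (hlt : A.Definable L {v : Fin 2 → M | v 0 < v 1})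
    (hf : A.DefinableFun L f) (hg : A.DefinableFun L g) : A.Definable L {v | f v ≤ g v} := by
  simp only [← not_lt]
  exact (definable_ofPred_lt hlt hg hf).compl

theorem Set.DefinableFun.add [Add M] (hadd : A.Definable L {v : Fin 3 → M | v 0 + v 1 = v 2})
    (hf : A.DefinableFun L f) (hg : A.DefinableFun L g) :
    A.DefinableFun L fun v => f v + g v := by
  have hplus : A.DefinableFun L fun v : Fin 2 → M => v 0 + v 1 :=
    hadd.preimage_comp ![some 0, some 1, none]
  exact DefinableFun.comp (g := fun v => ![f v, g v])
    (by simp [DefinableMap, Fin.forall_fin_two, *]) hplus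

end DefinableCalculus

section Boxes

variable {R : Type*} [LinearOrder R] [TopologicalSpace R] [OrderTopology R] {ι : Type*} [Finite ι]

theorem isOpen_setOf_forall_lt_lt (a b : ι → R) :
    IsOpen {y : ι → R | ∀ i, a i < y i ∧ y i < b i} := by
  simpa [Set.pi] using isOpen_set_pi finite_univ fun i _ => isOpen_Ioo (a := a i) (b := b i)

theorem mem_interior_iff_exists_forall_lt_lt [NoMinOrder R] [NoMaxOrder R]
    {s : Set (ι → R)} {x : ι → R} :
    x ∈ interior s ↔ ∃ a b : ι → R, (∀ i, a i < x i ∧ x i < b i) ∧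
      ∀ y : ι → R, (∀ i, a i < y i ∧ y i < b i) → y ∈ s := by
  constructor
  · rw [mem_interior_iff_mem_nhds, nhds_pi, Filter.mem_pi']
    rintro ⟨I, t, ht, hts⟩
    choose ab hab hsub using fun i => (nhds_basis_Ioo (x i)).mem_iff.1 (ht i)
    exact ⟨fun i => (ab i).1, fun i => (ab i).2, hab, fun y hy => hts fun i _ => hsub i (hy i)⟩
  · rintro ⟨a, b, hx, hs⟩
    exact interior_maximal hs (isOpen_setOf_forall_lt_lt a b) hx

end Boxes

section DefinableOrder

variable {R : Type*} {L : FirstOrder.Language} [L.Structure R] [LinearOrder R]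
  (hlt : IsDefinable L {v : Fin 2 → R | v 0 < v 1})
include hlt

theorem definable_ofPred_mem_interior [TopologicalSpace R] [OrderTopology R] [NoMinOrder R]
    [NoMaxOrder R] {α ι : Type*} [Finite ι] {p : (α → R) → (ι → R) → Prop}
    (hp : (univ : Set R).Definable L
      {w : α ⊕ ι → R | p (fun a => w (.inl a)) (fun i => w (.inr i))}) :
    (univ : Set R).Definable L
      {w : α ⊕ ι → R | (fun i => w (.inr i)) ∈ interior {y | p (fun a => w (.inl a)) y}} := by
  simp_rw [mem_interior_iff_exists_forall_lt_lt, mem_ofPred_eq]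
  refine definable_ofPred_exists_tuple (definable_ofPred_exists_tuple
    (definable_ofPred_and ?_ (definable_ofPred_forall_tuple (definable_ofPred_imp ?_ ?_))))
  on_goal 3 => exact hp.preimage_comp (Sum.elim (Sum.inl ∘ Sum.inl ∘ Sum.inl ∘ Sum.inl) Sum.inr)
  all_goals
    exact definable_ofPred_forall_of_finite fun i => definable_ofPred_and
      (definable_ofPred_lt hlt (DefinableFun.proj L) (DefinableFun.proj L))
      (definable_ofPred_lt hlt (DefinableFun.proj L) (DefinableFun.proj L))

theorem exists_isGLB_of_definable (hDC : DCProp L R) {S : Set R}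
    (hS : IsDefinable L {v : Fin 1 → R | v 0 ∈ S}) (hne : S.Nonempty) (hbdd : BddBelow S) :
    ∃ a, IsGLB S a := by
  have hlb : IsDefinable L {v : Fin 1 → R | ∀ y, y ∈ S → v 0 ≤ y} :=
    definable_ofPred_forall (definable_ofPred_imp (hS.preimage_comp fun _ => Sum.inr ())
      (definable_ofPred_le hlt (DefinableFun.proj L) (DefinableFun.proj L)))
  obtain ⟨a, ha⟩ := hDC (lowerBounds S) hlb hbdd hne.bddAbove_lowerBounds
  exact ⟨a, isLUB_lowerBounds.1 ha⟩

theorem definable_ofPred_Icc_subset_fiber1 [Add R]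
    (hadd : IsDefinable L {v : Fin 3 → R | v 0 + v 1 = v 2}) {n : ℕ} {X : Set (Fin (n + 1) → R)}
    (hX : IsDefinable L X) (s : R) {β : Type*} (f : Fin n → β) (j : β) :
    (univ : Set R).Definable L {w : β → R | Icc (w j) (w j + s) ⊆ fiber1 X fun i => w (f i)} := by
  simp only [subset_def, mem_Icc, and_imp]
  exact definable_ofPred_forall (definable_ofPred_imp
    (definable_ofPred_le hlt (DefinableFun.proj L) (DefinableFun.proj L))
    (definable_ofPred_imp (definable_ofPred_le hlt (DefinableFun.proj L)
      (DefinableFun.add hadd (DefinableFun.proj L) (L.definableFun_const _ (mem_univ s))))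
      (definable_ofPred_snoc_mem hX _ _)))

end DefinableOrder

section Tube

variable {Y R : Type*} [TopologicalSpace Y] [LinearOrder R] [DenselyOrdered R] [NoMinOrder R]
  [TopologicalSpace R] [OrderTopology R]

theorem eventually_forall_Icc_mem_of_isLUB {W : Set (Y × R)} (hW : IsOpen W) {x : Y} {c e : R}
    (hx : ∀ t ∈ Icc c e, (x, t) ∈ W)
    (hS : {t | t ∈ Icc c e ∧ ∀ᶠ y in 𝓝 x, ∀ t' ∈ Icc c t, (y, t') ∈ W}.Nonempty →
      ∃ m, IsLUB {t | t ∈ Icc c e ∧ ∀ᶠ y in 𝓝 x, ∀ t' ∈ Icc c t, (y, t') ∈ W} m) :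
    ∀ᶠ y in 𝓝 x, ∀ t ∈ Icc c e, (y, t) ∈ W := by
  rcases lt_or_ge e c with hec | hce
  · exact Eventually.of_forall fun y t ht => absurd (ht.1.trans ht.2) hec.not_ge
  have hcS : ∀ᶠ y in 𝓝 x, ∀ t' ∈ Icc c c, (y, t') ∈ W := by
    filter_upwards [(continuous_id.prodMk continuous_const).tendsto x
      (hW.mem_nhds (hx c ⟨le_rfl, hce⟩))] with y hy t' ht'
    rwa [le_antisymm ht'.2 ht'.1]
  obtain ⟨m, hm⟩ := hS ⟨c, ⟨le_rfl, hce⟩, hcS⟩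
  have hcm : c ≤ m := hm.1 ⟨⟨le_rfl, hce⟩, hcS⟩
  have hme : m ≤ e := hm.2 fun t ht => ht.1.2
  obtain ⟨P, hP, Q, hQ, hPQ⟩ := eventually_prod_iff.1
    (nhds_prod_eq (x := x) (y := m) ▸ hW.mem_nhds (hx m ⟨hcm, hme⟩))
  obtain ⟨l, hlm, hlQ⟩ := exists_Ioc_subset_of_mem_nhds hQ (exists_lt m)
  obtain ⟨t₁, ht₁S, hlt₁, -⟩ := hm.exists_between hlm
  -- `[c, t₁]` is covered since `t₁` lies in the set of `hS`, and `(l, t]` since `P × Q ⊆ W`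
  have hcover : ∀ t, Ioc l t ⊆ {t | Q t} → ∀ᶠ y in 𝓝 x, ∀ t' ∈ Icc c t, (y, t') ∈ W := by
    intro t ht
    filter_upwards [ht₁S.2, hP] with y hy₁ hyP t' ht'
    rcases le_or_gt t' t₁ with h | h
    exacts [hy₁ t' ⟨ht'.1, h⟩, hPQ hyP (ht ⟨hlt₁.trans h, ht'.2⟩)]
  obtain rfl | hme := hme.eq_or_lt
  · exact hcover m hlQ
  obtain ⟨r, hmr, hrQ⟩ := exists_Ico_subset_of_mem_nhds hQ ⟨e, hme⟩
  obtain ⟨γ, hmγ, hγ⟩ := exists_between (lt_min hmr hme)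
  have hγS : γ ∈ {t | t ∈ Icc c e ∧ ∀ᶠ y in 𝓝 x, ∀ t' ∈ Icc c t, (y, t') ∈ W} := by
    refine ⟨⟨hcm.trans hmγ.le, hγ.le.trans (min_le_right _ _)⟩, hcover γ fun t ht => ?_⟩
    rcases le_or_gt t m with h | h
    exacts [hlQ ⟨ht.1, h⟩, hrQ ⟨h.le, ht.2.trans_lt (hγ.trans_le (min_le_left _ _))⟩]
  exact ((hm.1 hγS).not_gt hmγ).elim

end Tube

section FiberIntervalLocus

def fiberIntervalLocus {Y R : Type*} [Preorder R] [Add R] (G : Set (Y × R)) (s c u : R) : Set Y :=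
  {x | ∃ t ∈ Icc c u, Icc t (t + s) ⊆ Prod.mk x ⁻¹' G}

theorem fiberIntervalLocus_mono {Y R : Type*} [Preorder R] [Add R] (G : Set (Y × R)) (s c : R) :
    Monotone (fiberIntervalLocus G s c) :=
  fun _ _ huv _ ⟨t, ht, hts⟩ => ⟨t, ⟨ht.1, ht.2.trans huv⟩, hts⟩

variable {Y R : Type*} [TopologicalSpace Y] [AddCommGroup R] [LinearOrder R]
  [IsOrderedAddMonoid R] [TopologicalSpace R] [OrderTopology R]

theorem isClosed_setOf_Icc_subset_preimage {G : Set (Y × R)} (hG : IsClosed G) (s : R) :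
    IsClosed {p : Y × R | Icc p.2 (p.2 + s) ⊆ Prod.mk p.1 ⁻¹' G} := by
  have hshift : {p : Y × R | Icc p.2 (p.2 + s) ⊆ Prod.mk p.1 ⁻¹' G} =
      ⋂ δ ∈ Icc 0 s, {p | (p.1, p.2 + δ) ∈ G} := by
    ext ⟨x, t⟩
    simp only [mem_ofPred_eq, mem_iInter]
    refine ⟨fun hts δ hδ => hts ⟨le_add_of_nonneg_right hδ.1, add_le_add_right hδ.2 t⟩,
      fun hG y hy => ?_⟩
    simpa using hG (y - t) ⟨sub_nonneg.2 hy.1, sub_le_iff_le_add'.2 hy.2⟩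
  rw [hshift]
  exact isClosed_biInter fun δ _ =>
    hG.preimage (continuous_fst.prodMk (continuous_snd.add continuous_const))

theorem interior_nonempty_of_isGLB [DenselyOrdered R] {G : Set (Y × R)} {s c u₀ : R}
    (hs : 0 < s) (hC : ∀ u, IsClosed (fiberIntervalLocus G s c u))
    (hu₀ : IsGLB {u | (interior (fiberIntervalLocus G s c u)).Nonempty} u₀) :
    (interior G).Nonempty := by
  obtain ⟨δ, hδ, hδs⟩ := exists_between hs
  obtain ⟨u', hu'₁, hu'₂⟩ : ∃ u', u₀ + δ - s < u' ∧ u' < u₀ :=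
    exists_between (sub_lt_iff_lt_add.2 (add_lt_add_right hδs u₀))
  obtain ⟨τ, ⟨x, hx⟩, -, hτ⟩ := hu₀.exists_between (lt_add_of_pos_right u₀ hδ)
  set V := interior (fiberIntervalLocus G s c (u₀ + δ))
  have hV : x ∈ V := interior_mono (fiberIntervalLocus_mono G s c hτ.le) hx
  have hVC : (V \ fiberIntervalLocus G s c u').Nonempty := by
    by_contra hempty
    rw [not_nonempty_iff_eq_empty, sdiff_eq_empty] at hempty
    exact (hu₀.1 ⟨x, interior_maximal hempty isOpen_interior hV⟩).not_gt hu'₂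
  have hsub : (V \ fiberIntervalLocus G s c u') ×ˢ Ioo (u₀ + δ) (u' + s) ⊆ G := by
    rintro ⟨x, y⟩ ⟨⟨hxV, hxu'⟩, hy⟩
    obtain ⟨t, ht, hts⟩ := interior_subset hxV
    have htu' : u' < t := not_le.1 fun hle => hxu' ⟨t, ⟨ht.1, hle⟩, hts⟩
    exact hts ⟨ht.2.trans hy.1.le, (hy.2.trans (add_lt_add_left htu' s)).le⟩
  exact (hVC.prod (nonempty_Ioo.2 (sub_lt_iff_lt_add.1 hu'₁))).mono
    (interior_maximal hsub ((isOpen_interior.sdiff (hC u')).prod isOpen_Ioo))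

end FiberIntervalLocus

section DefinableFiberIntervalLocus

variable {R : Type*} {L : FirstOrder.Language} [L.Structure R] [AddCommGroup R] [LinearOrder R]
  [IsOrderedAddMonoid R] [Nontrivial R] [TopologicalSpace R] [OrderTopology R]
  (hlt : IsDefinable L {v : Fin 2 → R | v 0 < v 1})
  (hadd : IsDefinable L {v : Fin 3 → R | v 0 + v 1 = v 2})
  {n : ℕ} {X : Set (Fin (n + 1) → R)} (hX : IsDefinable L X)
include hlt hadd hX

theorem definable_ofPred_interior_fiberIntervalLocus_nonempty (s c : R) :
    IsDefinable L {v : Fin 1 → R | (interior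
      (fiberIntervalLocus {p : (Fin n → R) × R | Fin.snoc p.1 p.2 ∈ X} s c (v 0))).Nonempty} := by
  refine definable_ofPred_exists_tuple (definable_ofPred_mem_interior hlt
    (p := fun v x => ∃ t, (c ≤ t ∧ t ≤ v 0) ∧ Icc t (t + s) ⊆ fiber1 X x) ?_)
  refine definable_ofPred_exists (definable_ofPred_and (definable_ofPred_and ?_ ?_)
    (definable_ofPred_Icc_subset_fiber1 hlt hadd hX s _ _))
  · exact definable_ofPred_le hlt (L.definableFun_const _ (mem_univ c)) (DefinableFun.proj L)
  · exact definable_ofPred_le hlt (DefinableFun.proj L) (DefinableFun.proj L)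

theorem isClosed_fiberIntervalLocus [DenselyOrdered R] (hDC : DCProp L R) (hXcl : IsClosed X)
    (s c u : R) :
    IsClosed (fiberIntervalLocus {p : (Fin n → R) × R | Fin.snoc p.1 p.2 ∈ X} s c u) := by
  set G := {p : (Fin n → R) × R | Fin.snoc p.1 p.2 ∈ X}
  have hG : IsClosed G := hXcl.preimage (continuous_fst.finSnoc continuous_snd)
  rw [← isOpen_compl_iff, isOpen_iff_eventually]
  intro x hx
  simp only [fiberIntervalLocus, mem_compl_iff, mem_ofPred_eq, not_exists, not_and] at hx ⊢
  refine eventually_forall_Icc_mem_of_isLUB (isClosed_setOf_Icc_subset_preimage hG s).isOpen_compl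
    hx fun hne => hDC _ ?_ hne ⟨u, fun t ht => ht.1.2⟩
  -- the set of the tube lemma, with the point `x` as a variable that is fixed afterwards
  have hS : (univ : Set R).Definable L {w : Fin 1 ⊕ Fin n → R |
      (c ≤ w (.inl 0) ∧ w (.inl 0) ≤ u) ∧ (fun i => w (.inr i)) ∈ interior
        {y | ∀ t, c ≤ t → t ≤ w (.inl 0) → ¬ Icc t (t + s) ⊆ fiber1 X y}} := by
    refine definable_ofPred_and (definable_ofPred_and ?_ ?_) (definable_ofPred_mem_interior hlt
      (p := fun v y => ∀ t, c ≤ t → t ≤ v 0 → ¬ Icc t (t + s) ⊆ fiber1 X y) ?_)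
    · exact definable_ofPred_le hlt (L.definableFun_const _ (mem_univ c)) (DefinableFun.proj L)
    · exact definable_ofPred_le hlt (DefinableFun.proj L) (L.definableFun_const _ (mem_univ u))
    refine definable_ofPred_forall (definable_ofPred_imp ?_ (definable_ofPred_imp ?_
      (definable_ofPred_Icc_subset_fiber1 hlt hadd hX s _ _).compl))
    · exact definable_ofPred_le hlt (L.definableFun_const _ (mem_univ c)) (DefinableFun.proj L)
    · exact definable_ofPred_le hlt (DefinableFun.proj L) (DefinableFun.proj L)
  unfold IsDefinable
  convert definable_ofPred_sumElim hS x using 2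
  ext v
  simp [mem_interior_iff_mem_nhds, Filter.Eventually, fiber1, G]

end DefinableFiberIntervalLocus

theorem interior_nonempty_of_interior_preimage_snoc {R : Type*} [TopologicalSpace R] {n : ℕ}
    {X : Set (Fin (n + 1) → R)}
    (h : (interior {p : (Fin n → R) × R | Fin.snoc p.1 p.2 ∈ X}).Nonempty) :
    (interior X).Nonempty := by
  obtain ⟨p, hp⟩ := h
  let split : (Fin (n + 1) → R) → (Fin n → R) × R := fun z => (Fin.init z, z (Fin.last n))
  have hsplit : Continuous split :=
    (continuous_pi fun i => continuous_apply _).prodMk (continuous_apply _)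
  refine ⟨Fin.snoc p.1 p.2, interior_maximal
    (t := split ⁻¹' interior {p : (Fin n → R) × R | Fin.snoc p.1 p.2 ∈ X}) (fun z hz => ?_)
    (isOpen_interior.preimage hsplit) ?_⟩
  · simpa [split] using interior_subset hz
  · simpa [split] using hp

/-- Let `𝓡` be a definably complete expansion of a densely linearly
ordered abelian group. A CBD set `X ⊆ R^{n+1}` has nonempty interior if, for some
`s > 0`, the set of `x ∈ R^n` whose fiber `X_x` contains a closed interval of length
`s` has nonempty interior. -/
theorem cbd_nonempty_interior_of_fibers_with_intervals
    {R : Type*} (L : FirstOrder.Language) [L.Structure R]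
    [LinearOrder R] [DenselyOrdered R] [AddCommGroup R]
    [CovariantClass R R (· + ·) (· < ·)] [TopologicalSpace R] [OrderTopology R]
    (hlt : IsDefinable L {v : Fin 2 → R | v 0 < v 1})
    (hadd : IsDefinable L {v : Fin 3 → R | v 0 + v 1 = v 2})
    (hDC : DCProp L R)
    {n : ℕ} (X : Set (Fin (n + 1) → R))
    (hXDef : IsDefinable L X) (hXcl : IsClosed X) (hXbdd : BddSet X)
    (h : ∃ s : R, 0 < s ∧
      (interior {x : Fin n → R | ∃ t : R, Set.Icc t (t + s) ⊆ fiber1 X x}).Nonempty) :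
    (interior X).Nonempty := by
  obtain ⟨s, hs, x₀, hx₀⟩ := h
  obtain ⟨c, d, hXcd⟩ := hXbdd
  have := IsOrderedCancelAddMonoid.of_add_lt_add_left (α := R) fun a _ _ => CovariantClass.elim a
  have : Nontrivial R := ⟨⟨0, s, hs.ne⟩⟩
  set G := {p : (Fin n → R) × R | Fin.snoc p.1 p.2 ∈ X}
  have hfiber : ∀ x t, t ∈ fiber1 X x → c ≤ t ∧ t ≤ d := fun x t ht => by
    simpa using hXcd _ ht (Fin.last n)
  have hA : {x | ∃ t, Icc t (t + s) ⊆ fiber1 X x} ⊆ fiberIntervalLocus G s c d := by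
    rintro x ⟨t, ht⟩
    exact ⟨t, hfiber x t (ht ⟨le_rfl, le_add_of_nonneg_right hs.le⟩), ht⟩
  have hd : (interior (fiberIntervalLocus G s c d)).Nonempty := ⟨x₀, interior_mono hA hx₀⟩
  have hc : c ∈ lowerBounds {u | (interior (fiberIntervalLocus G s c u)).Nonempty} := by
    rintro u ⟨x, hx⟩
    obtain ⟨t, ht, -⟩ := interior_subset hx
    exact ht.1.trans ht.2
  obtain ⟨u₀, hu₀⟩ := exists_isGLB_of_definable hlt hDC
    (definable_ofPred_interior_fiberIntervalLocus_nonempty hlt hadd hXDef s c) ⟨d, hd⟩ ⟨c, hc⟩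
  exact interior_nonempty_of_interior_preimage_snoc (interior_nonempty_of_isGLB hs
    (isClosed_fiberIntervalLocus hlt hadd hXDef hDC hXcl s c) hu₀)
end

section
/- Let 𝓡 = (R, <, +, 0, …) be an expansion of a densely linearly ordered abelian group with 𝓡 ⊨ DC and 𝓡 ⊨ LUF₂. Let X ⊆ R^{m+n} be a definable set such that the fiber X_x is closed and discrete for every x ∈ R^m. Then for every (b,a) ∈ R^m × R^n there exist a closed box B ⊆ R^n with a ∈ int(B) and an open box U containing b such that X_x ∩ B is a finite set for every x ∈ U. In addition, U can be taken to be R^m if 𝓡 ⊨ LUF₁, and B can be taken independently of X if 𝓡 ⊨ SLUF. -/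
open FirstOrder Set Topology

/-!
Induction on `n`, writing `a = (a', α)` with `α` the last coordinate.

In the last coordinate, LUF yields an interval `[p, q] ∋ α` on which the slices
`X_{(x, y)} ⊆ R` are finite. Indeed, let `Y ⊆ R` be closed, discrete and definable, with
`|Y ∩ J| = ∞` or `|Y ∩ J| ≤ N` whenever `α ∈ int J ⊆ [p, q]`. If `Y ∩ [p, q]` were infinite,
DC would give the `N + 1` points of `Y` closest to `α` on one side, and these span such an
interval `J` with finitely many, but more than `N`, points of `Y`.

For the other coordinates, apply the induction hypothesis to the projection of
`X ∩ (R^m × B' × [p, q])` forgetting the last coordinate. Its fibers are still closed and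
discrete: if `S ⊆ R^{k+1}` is definable with bounded last coordinate and `z` lies in the
closure of its projection, then `(z, t) ∈ closure S` for `t` the supremum (by DC) of the `u`
such that points of `S` with last coordinate `≥ u` lie over points arbitrarily close to `z`.
-/

theorem not_infinite_or_ncard_le_of_subset_insert {α : Type*} {F S : Set α} {a : α} {N : ℕ}
    (hF : F.encard = N + 1) (hFS : F ⊆ S) (hSF : S ⊆ insert a F) : ¬(S.Infinite ∨ S.ncard ≤ N) := by
  have hfin : S.Finite := ((finite_of_encard_eq_coe hF).insert a).subset hSF
  rintro (h | h)
  · exact h hfin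
  · have hle := (encard_le_encard hFS).trans_eq hfin.cast_ncard_eq.symm
    rw [hF] at hle
    have : N + 1 ≤ S.ncard := by exact_mod_cast hle
    omega

section DiscreteSet
variable {X : Type*} [TopologicalSpace X]

theorem discreteSet_iff_notMem_closure_diff {S : Set X} :
    DiscreteSet S ↔ ∀ y ∈ S, y ∉ closure (S \ {y}) := by
  refine ⟨fun h y hy hcl => ?_, fun h y hy => ?_⟩
  · obtain ⟨U, hU, hyU, hUS⟩ := h y hy
    obtain ⟨w, hwU, hwS, hwy⟩ := mem_closure_iff.1 hcl U hU hyU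
    exact hwy (hUS.subset ⟨hwU, hwS⟩)
  · refine ⟨(closure (S \ {y}))ᶜ, isClosed_closure.isOpen_compl, h y hy, ?_⟩
    refine Subset.antisymm (fun w ⟨hwU, hwS⟩ => ?_) (singleton_subset_iff.2 ⟨h y hy, hy⟩)
    by_contra hwy
    exact hwU (subset_closure ⟨hwS, hwy⟩)

theorem DiscreteSet.mono {S T : Set X} (hT : DiscreteSet T) (hST : S ⊆ T) : DiscreteSet S := by
  rw [discreteSet_iff_notMem_closure_diff] at hT ⊢
  exact fun y hy hcl => hT y (hST hy) (closure_mono (sdiff_subset_sdiff_left hST) hcl)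

theorem DiscreteSet.preimage {Y : Type*} [TopologicalSpace Y] {S : Set Y} (hS : DiscreteSet S)
    {f : X → Y} (hf : Continuous f) (hinj : Function.Injective f) : DiscreteSet (f ⁻¹' S) := by
  intro y hy
  obtain ⟨U, hU, hyU, hUS⟩ := hS (f y) hy
  refine ⟨f ⁻¹' U, hU.preimage hf, hyU, ?_⟩
  rw [← preimage_inter, hUS, ← image_singleton, hinj.preimage_image]

theorem DiscreteSet.notMem_closure_diff {Y : Set X} (hd : DiscreteSet Y) (hcl : IsClosed Y)
    (a : X) : a ∉ closure (Y \ {a}) := fun ha => by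
  by_cases haY : a ∈ Y
  · exact discreteSet_iff_notMem_closure_diff.1 hd a haY ha
  · exact haY (hcl.closure_subset (closure_mono sdiff_subset ha))

end DiscreteSet

section Definability
variable {R : Type*} {L : FirstOrder.Language} [L.Structure R]

theorem Set.Definable₁.inter {S T : Set R} (hS : univ.Definable₁ L S)
    (hT : univ.Definable₁ L T) : univ.Definable₁ L (S ∩ T) :=
  Definable.inter hS hT

theorem isDefinable_fiberN {m n : ℕ} {X : Set (Fin (m + n) → R)} (hX : IsDefinable L X)
    (x : Fin m → R) : IsDefinable L (fiberN X x) := by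
  refine Definable.preimage_map (F := fun y => Fin.append x y) (fun j => ?_) hX
  refine Fin.addCases (fun i => ?_) (fun i => ?_) j
  · simpa only [Fin.append_left] using L.definableFun_const _ (mem_univ (x i))
  · simpa only [Fin.append_right] using DefinableFun.proj L

theorem definable₁_fiber1 {m : ℕ} {X : Set (Fin (m + 1) → R)} (hX : IsDefinable L X)
    (z : Fin m → R) : univ.Definable₁ L (fiber1 X z) := by
  refine Definable.preimage_map (F := fun v => Fin.snoc z (v 0)) (fun j => ?_) hX
  refine Fin.lastCases ?_ (fun i => ?_) j
  · simpa only [Fin.snoc_last] using DefinableFun.proj L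
  · simpa only [Fin.snoc_castSucc] using L.definableFun_const _ (mem_univ (z i))

variable [LinearOrder R]

theorem Set.Definable.setOf_lt (hlt : IsDefinable L {v : Fin 2 → R | v 0 < v 1}) {α : Type*}
    {f g : (α → R) → R} (hf : univ.DefinableFun L f) (hg : univ.DefinableFun L g) :
    univ.Definable L {v | f v < g v} :=
  Definable.preimage_map (F := fun v => ![f v, g v]) (by simp [DefinableMap, *]) hlt

theorem Set.Definable.setOf_le (hlt : IsDefinable L {v : Fin 2 → R | v 0 < v 1}) {α : Type*}
    {f g : (α → R) → R} (hf : univ.DefinableFun L f) (hg : univ.DefinableFun L g) :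
    univ.Definable L {v | f v ≤ g v} := by
  simpa only [compl_ofPred, not_lt] using (Definable.setOf_lt hlt hg hf).compl

theorem Set.definable₁_Iio (hlt : IsDefinable L {v : Fin 2 → R | v 0 < v 1}) (e : R) :
    univ.Definable₁ L (Iio e) :=
  .setOf_lt hlt (DefinableFun.proj L) (L.definableFun_const _ (mem_univ e))

theorem Set.definable₁_Ioi (hlt : IsDefinable L {v : Fin 2 → R | v 0 < v 1}) (e : R) :
    univ.Definable₁ L (Ioi e) :=
  .setOf_lt hlt (L.definableFun_const _ (mem_univ e)) (DefinableFun.proj L)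

theorem Set.definable₁_Icc (hlt : IsDefinable L {v : Fin 2 → R | v 0 < v 1}) (a b : R) :
    univ.Definable₁ L (Icc a b) :=
  Definable.inter (.setOf_le hlt (L.definableFun_const _ (mem_univ a)) (DefinableFun.proj L))
    (.setOf_le hlt (DefinableFun.proj L) (L.definableFun_const _ (mem_univ b)))

theorem Set.definable_Icc (hlt : IsDefinable L {v : Fin 2 → R | v 0 < v 1}) {ι : Type*}
    [Finite ι] (c d : ι → R) : univ.Definable L (Icc c d) := by
  convert definable_iInter_of_finite fun i =>
    (Definable.setOf_le hlt (L.definableFun_const _ (mem_univ (c i)))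
      (DefinableFun.proj L (i := i))).inter
      (Definable.setOf_le hlt (DefinableFun.proj L (i := i))
        (L.definableFun_const _ (mem_univ (d i)))) using 1
  ext v
  simp [Pi.le_def, forall_and]

theorem DCProp.exists_isGLB (hDC : DCProp L R) (hlt : IsDefinable L {v : Fin 2 → R | v 0 < v 1})
    {S : Set R} (hS : univ.Definable₁ L S) (hne : S.Nonempty) (hbdd : BddBelow S) :
    ∃ a, IsGLB S a := by
  have hlow : univ.Definable₁ L (lowerBounds S) := by
    have hT : univ.Definable L ({w : Fin 1 ⊕ Fin 1 → R | w (Sum.inr 0) ∈ S}ᶜ ∪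
        {w | w (Sum.inl 0) ≤ w (Sum.inr 0)}) :=
      (hS.preimage_comp fun _ => Sum.inr 0).compl.union
        (.setOf_le hlt (DefinableFun.proj L (i := Sum.inl 0)) (DefinableFun.proj L))
    unfold Definable₁
    convert hT.forall_of_finite using 1
    ext v
    simp only [lowerBounds, mem_ofPred_eq, mem_union, mem_compl_iff, Sum.elim_inl, Sum.elim_inr,
      imp_iff_not_or]
    exact ⟨fun h u => @h (u 0), fun h y => h fun _ => y⟩
  obtain ⟨a, ha⟩ := hDC _ hlow hbdd ⟨hne.some, fun w hw => hw hne.some_mem⟩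
  exact ⟨a, fun y hy => ha.2 fun w hw => hw hy, fun w hw => ha.1 hw⟩

end Definability

section Fibers
variable {R : Type*}

theorem fiber1_append {m k : ℕ} (X : Set (Fin (m + (k + 1)) → R)) (x : Fin m → R)
    (y : Fin k → R) : fiber1 X (Fin.append x y) = (Fin.snoc y ·) ⁻¹' fiberN X x := by
  ext t
  simp only [fiber1, fiberN, mem_ofPred_eq, mem_preimage, Fin.append_snoc]

theorem isClosed_and_discreteSet_fiber1 [TopologicalSpace R] {m k : ℕ}
    {X : Set (Fin (m + (k + 1)) → R)}
    (hX : ∀ x, IsClosed (fiberN X x) ∧ DiscreteSet (fiberN X x)) (z : Fin (m + k) → R) :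
    IsClosed (fiber1 X z) ∧ DiscreteSet (fiber1 X z) := by
  rw [← Fin.append_castAdd_natAdd (f := z), fiber1_append]
  have hc : Continuous fun t : R => (Fin.snoc (fun i => z (Fin.natAdd m i)) t : Fin (k + 1) → R) :=
    Continuous.finSnoc (A := fun _ => R) continuous_const continuous_id
  exact ⟨(hX _).1.preimage hc, (hX _).2.preimage hc (Fin.snoc_right_injective (α := fun _ => R) _)⟩

end Fibers

section ExtremePoints
variable {R : Type*} [LinearOrder R] [TopologicalSpace R] [OrderTopology R] {W : Set R}

theorem IsLUB.inter_Ici_eq_insert (hW : IsClosed W) (hWd : DiscreteSet W) {e a : R}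
    (hne : (W ∩ Iio e).Nonempty) (ha : IsLUB (W ∩ Iio e) a) :
    a ∈ W ∧ a < e ∧ W ∩ Ici a = insert a (W ∩ Ici e) := by
  have haW : a ∈ W :=
    hW.closure_subset (closure_mono inter_subset_left (ha.mem_closure hne))
  have hae : a < e := by
    refine (ha.2 fun w hw => hw.2.le).lt_of_ne fun hae => ?_
    subst hae
    have hsub : W ∩ Iio a ⊆ W \ {a} := fun w hw => ⟨hw.1, hw.2.ne⟩
    exact discreteSet_iff_notMem_closure_diff.1 hWd a haW (closure_mono hsub (ha.mem_closure hne))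
  refine ⟨haW, hae, Set.ext fun w => ?_⟩
  simp only [mem_inter_iff, mem_Ici, mem_insert_iff]
  constructor
  · rintro ⟨hwW, haw⟩
    rcases lt_or_ge w e with hwe | hew
    · exact Or.inl (le_antisymm (ha.1 ⟨hwW, hwe⟩) haw)
    · exact Or.inr ⟨hwW, hew⟩
  · rintro (rfl | ⟨hwW, hew⟩)
    · exact ⟨haW, le_rfl⟩
    · exact ⟨hwW, hae.le.trans hew⟩

theorem exists_mem_encard_inter_Ici_eq (hW : IsClosed W) (hWd : DiscreteSet W)
    (hinf : W.Infinite) {e₀ : R} (he₀ : W ⊆ Iio e₀)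
    (hlub : ∀ e, (W ∩ Iio e).Nonempty → ∃ a, IsLUB (W ∩ Iio e) a) (j : ℕ) :
    ∃ e ∈ W, (W ∩ Ici e).encard = j + 1 := by
  induction j with
  | zero =>
    have hne : (W ∩ Iio e₀).Nonempty := by rw [inter_eq_left.2 he₀]; exact hinf.nonempty
    obtain ⟨a, ha⟩ := hlub e₀ hne
    obtain ⟨haW, -, heq⟩ := ha.inter_Ici_eq_insert hW hWd hne
    have hempty : W ∩ Ici e₀ = ∅ :=
      eq_empty_of_forall_notMem fun w hw => not_le.2 (he₀ hw.1) hw.2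
    exact ⟨a, haW, by simp [heq, hempty]⟩
  | succ j ih =>
    obtain ⟨e, -, he⟩ := ih
    have hfin : (W ∩ Ici e).Finite := finite_of_encard_eq_coe he
    have hne : (W ∩ Iio e).Nonempty :=
      (hinf.sdiff hfin).nonempty.mono fun w hw =>
        ⟨hw.1, not_le.1 fun hew => hw.2 ⟨hw.1, hew⟩⟩
    obtain ⟨a, ha⟩ := hlub e hne
    obtain ⟨haW, hae, heq⟩ := ha.inter_Ici_eq_insert hW hWd hne
    refine ⟨a, haW, ?_⟩
    rw [heq, encard_insert_of_notMem fun h => not_le.2 hae h.2, he]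
    rfl

theorem exists_mem_encard_inter_Iic_eq (hW : IsClosed W) (hWd : DiscreteSet W)
    (hinf : W.Infinite) {e₀ : R} (he₀ : W ⊆ Ioi e₀)
    (hglb : ∀ e, (W ∩ Ioi e).Nonempty → ∃ a, IsGLB (W ∩ Ioi e) a) (j : ℕ) :
    ∃ e ∈ W, (W ∩ Iic e).encard = j + 1 :=
  exists_mem_encard_inter_Ici_eq (R := Rᵒᵈ) (W := OrderDual.ofDual ⁻¹' W) hW hWd hinf
    (e₀ := OrderDual.toDual e₀) he₀ (fun e he => hglb (OrderDual.ofDual e) he) j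

end ExtremePoints

section UniformFiniteness
variable {R : Type*} {L : FirstOrder.Language} [L.Structure R] [LinearOrder R]
  [TopologicalSpace R] [OrderTopology R] [NoMaxOrder R] [NoMinOrder R]

theorem DiscreteSet.exists_Ioo_inter_subset_singleton {Y : Set R} (hd : DiscreteSet Y)
    (hcl : IsClosed Y) {α p q : R} (hpα : p < α) (hαq : α < q) :
    ∃ s t, p ≤ s ∧ s < α ∧ α < t ∧ t ≤ q ∧ Y ∩ Ioo s t ⊆ {α} := by
  obtain ⟨l, u, ⟨hl, hu⟩, hsub⟩ := mem_nhds_iff_exists_Ioo_subset.1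
    (isClosed_closure.isOpen_compl.mem_nhds (hd.notMem_closure_diff hcl α))
  refine ⟨max l p, min u q, le_max_right _ _, max_lt hl hpα, lt_min hu hαq,
    min_le_right _ _, fun y ⟨hyY, hy⟩ => of_not_not fun hyα => ?_⟩
  exact hsub ⟨(le_max_left _ _).trans_lt hy.1, hy.2.trans_le (min_le_left _ _)⟩
    (subset_closure ⟨hyY, hyα⟩)

variable [DenselyOrdered R]

theorem finite_inter_Icc_of_infinite_or_ncard_le
    (hlt : IsDefinable L {v : Fin 2 → R | v 0 < v 1}) (hDC : DCProp L R) {Y : Set R}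
    (hYdef : univ.Definable₁ L Y) (hYcl : IsClosed Y) (hYd : DiscreteSet Y) {α p q : R} {N : ℕ}
    (hα : α ∈ interior (Icc p q))
    (hN : ∀ p' q', α ∈ interior (Icc p' q') → Icc p' q' ⊆ Icc p q →
      (Y ∩ Icc p' q').Infinite ∨ (Y ∩ Icc p' q').ncard ≤ N) :
    (Y ∩ Icc p q).Finite := by
  rw [interior_Icc] at hα
  obtain ⟨s, t, hps, hsα, hαt, htq, hmid⟩ := hYd.exists_Ioo_inter_subset_singleton hYcl hα.1 hα.2
  have hN' : ∀ p' q', p ≤ p' → p' < α → α < q' → q' ≤ q →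
      (Y ∩ Icc p' q').Infinite ∨ (Y ∩ Icc p' q').ncard ≤ N := fun p' q' hp' hp'α hαq' hq' =>
    hN p' q' (by rw [interior_Icc]; exact ⟨hp'α, hαq'⟩) (Icc_subset_Icc hp' hq')
  by_contra hinf
  have hside : (Y ∩ Icc p s).Infinite ∨ (Y ∩ Icc t q).Infinite := by
    by_contra! h
    refine hinf (((h.1.union h.2).insert α).subset fun y ⟨hyY, hy⟩ => ?_)
    rcases le_or_gt y s with hys | hsy
    · exact Or.inr (Or.inl ⟨hyY, hy.1, hys⟩)
    rcases lt_or_ge y t with hyt | hty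
    · exact Or.inl (hmid ⟨hyY, hsy, hyt⟩)
    · exact Or.inr (Or.inr ⟨hyY, hty, hy.2⟩)
  rcases hside with hW | hW
  · obtain ⟨e, ⟨-, hpe, hes⟩, he⟩ := exists_mem_encard_inter_Ici_eq
      (hYcl.inter isClosed_Icc) (hYd.mono inter_subset_left) hW
      (fun w hw => hw.2.2.trans_lt hsα) (fun e hne => hDC _
        ((hYdef.inter (definable₁_Icc hlt p s)).inter (definable₁_Iio hlt e)) hne
        ⟨e, fun w hw => hw.2.le⟩) N
    obtain ⟨t', hαt', ht't⟩ := exists_between hαt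
    refine not_infinite_or_ncard_le_of_subset_insert (S := Y ∩ Icc e t') (a := α) he
      (fun w ⟨⟨hwY, hw⟩, hew⟩ => ⟨hwY, hew, hw.2.trans (hsα.trans hαt').le⟩)
      (fun y ⟨hyY, hey, hyt'⟩ => ?_) (hN' e t' hpe (hes.trans_lt hsα) hαt' (ht't.le.trans htq))
    rcases le_or_gt y s with hys | hsy
    · exact Or.inr ⟨⟨hyY, hpe.trans hey, hys⟩, hey⟩
    · exact Or.inl (hmid ⟨hyY, hsy, hyt'.trans_lt ht't⟩)
  · obtain ⟨e, ⟨-, hte, heq⟩, he⟩ := exists_mem_encard_inter_Iic_eq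
      (hYcl.inter isClosed_Icc) (hYd.mono inter_subset_left) hW
      (fun w hw => hαt.trans_le hw.2.1) (fun e hne => hDC.exists_isGLB hlt
        ((hYdef.inter (definable₁_Icc hlt t q)).inter (definable₁_Ioi hlt e)) hne
        ⟨e, fun w hw => hw.2.le⟩) N
    obtain ⟨s', hss', hs'α⟩ := exists_between hsα
    refine not_infinite_or_ncard_le_of_subset_insert (S := Y ∩ Icc s' e) (a := α) he
      (fun w ⟨⟨hwY, hw⟩, hwe⟩ => ⟨hwY, (hs'α.trans hαt).le.trans hw.1, hwe⟩)
      (fun y ⟨hyY, hs'y, hye⟩ => ?_) (hN' s' e (hps.trans hss'.le) hs'α (hαt.trans_le hte) heq)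
    rcases lt_or_ge y t with hyt | hty
    · exact Or.inl (hmid ⟨hyY, hss'.trans_le hs'y, hyt⟩)
    · exact Or.inr ⟨⟨hyY, hty, hye.trans heq⟩, hye⟩

end UniformFiniteness

section Boxes
variable {R : Type*} [LinearOrder R]

theorem closedBox_Icc {n : ℕ} (c d : Fin n → R) : ClosedBox (Icc c d) :=
  ⟨c, d, by ext; simp [Pi.le_def, forall_and]⟩

theorem Fin.mem_Icc_snoc_iff {n : ℕ} {w : Fin (n + 1) → R} {c d : Fin n → R} {p q : R} :
    w ∈ Icc (Fin.snoc c p) (Fin.snoc d q) ↔ Fin.init w ∈ Icc c d ∧ w (Fin.last n) ∈ Icc p q := by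
  simp only [mem_Icc, Pi.le_def, Fin.forall_iff_castSucc, Fin.init, Fin.snoc_last,
    Fin.snoc_castSucc]
  tauto

variable [TopologicalSpace R]

theorem Icc_snoc_sup_snoc_inf_mem_nhds {n : ℕ} {a : Fin (n + 1) → R} {c₁ d₁ c₂ d₂ : Fin n → R}
    {p q : R} (h₁ : Icc c₁ d₁ ∈ 𝓝 (Fin.init a)) (h₂ : Icc c₂ d₂ ∈ 𝓝 (Fin.init a))
    (h : Icc p q ∈ 𝓝 (a (Fin.last n))) :
    Icc (Fin.snoc (c₁ ⊔ c₂) p) (Fin.snoc (d₁ ⊓ d₂) q) ∈ 𝓝 a := by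
  have : Icc (Fin.snoc (c₁ ⊔ c₂) p) (Fin.snoc (d₁ ⊓ d₂) q) = Fin.init ⁻¹' (Icc c₁ d₁ ∩ Icc c₂ d₂) ∩
      (fun w : Fin (n + 1) → R => w (Fin.last n)) ⁻¹' Icc p q := by
    ext w
    rw [Icc_inter_Icc]
    exact Fin.mem_Icc_snoc_iff
  rw [this]
  exact Filter.inter_mem
    ((continuous_id.finInit (A := fun _ => R)).continuousAt.preimage_mem_nhds
      (Filter.inter_mem h₁ h₂))
    ((continuous_apply _).continuousAt.preimage_mem_nhds h)

variable [OrderTopology R]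

theorem OpenBox.isOpen {n : ℕ} {U : Set (Fin n → R)} (hU : OpenBox U) : IsOpen U := by
  obtain ⟨c, d, rfl⟩ := hU
  simpa [Set.pi, mem_Ioo] using
    isOpen_set_pi finite_univ fun i (_ : i ∈ univ) => isOpen_Ioo (a := c i) (b := d i)

variable [NoMaxOrder R] [NoMinOrder R]

theorem exists_Icc_mem_nhds_pi {ι : Type*} [Finite ι] (a : ι → R) :
    ∃ c d : ι → R, Icc c d ∈ 𝓝 a := by
  choose c hc using fun i => exists_lt (a i)
  choose d hd using fun i => exists_gt (a i)
  exact ⟨c, d, pi_Icc_mem_nhds hc hd⟩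

theorem mem_closure_iff_forall_pi_Ioo {ι : Type*} [Finite ι] {A : Set (ι → R)} {z : ι → R} :
    z ∈ closure A ↔ ∀ c d : ι → R, z ∈ univ.pi (fun i => Ioo (c i) (d i)) →
      (A ∩ univ.pi fun i => Ioo (c i) (d i)).Nonempty := by
  refine ⟨fun hz c d hcd => ?_, fun h => mem_closure_iff_nhds.2 fun U hU => ?_⟩
  · exact (mem_closure_iff_nhds.1 hz _ ((isOpen_set_pi finite_univ fun i _ => isOpen_Ioo).mem_nhds
      hcd)).mono fun y hy => ⟨hy.2, hy.1⟩
  · rw [nhds_pi, Filter.mem_pi] at hU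
    obtain ⟨I, -, V, hV, hVU⟩ := hU
    choose c d hcd hsub using fun i => mem_nhds_iff_exists_Ioo_subset.1 (hV i)
    exact (h c d fun i _ => hcd i).mono fun y hy =>
      ⟨hVU fun i _ => hsub i (hy.2 i (mem_univ i)), hy.1⟩

theorem exists_snoc_mem_of_mem_nhds {k : ℕ} {U : Set (Fin (k + 1) → R)} {z : Fin k → R} {t : R}
    (hU : U ∈ 𝓝 (Fin.snoc z t)) :
    ∃ V ∈ 𝓝 z, ∃ e f, e < t ∧ t < f ∧ ∀ y ∈ V, ∀ s ∈ Ioo e f, Fin.snoc y s ∈ U := by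
  have hc : Continuous fun p : (Fin k → R) × R => (Fin.snoc p.1 p.2 : Fin (k + 1) → R) :=
    Continuous.finSnoc (A := fun _ => R) continuous_fst continuous_snd
  obtain ⟨V, hV, W, hW, hVW⟩ := Filter.mem_prod_iff.1
    (nhds_prod_eq (x := z) (y := t) ▸ hc.continuousAt.preimage_mem_nhds hU)
  obtain ⟨e, f, ⟨het, htf⟩, hef⟩ := mem_nhds_iff_exists_Ioo_subset.1 hW
  exact ⟨V, hV, e, f, het, htf, fun y hy s hs => hVW (mk_mem_prod hy (hef hs))⟩

variable [DenselyOrdered R]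

theorem exists_Icc_subset_of_mem_nhds_pi {ι : Type*} [Finite ι] {a : ι → R} {s : Set (ι → R)}
    (hs : s ∈ 𝓝 a) : ∃ c d : ι → R, (∀ i, c i < a i ∧ a i < d i) ∧ Icc c d ⊆ s := by
  rw [nhds_pi, Filter.mem_pi] at hs
  obtain ⟨I, -, t, ht, hts⟩ := hs
  choose l u hlu hsub using fun i => mem_nhds_iff_exists_Ioo_subset.1 (ht i)
  choose c hc using fun i => exists_between (hlu i).1
  choose d hd using fun i => exists_between (hlu i).2
  exact ⟨c, d, fun i => ⟨(hc i).2, (hd i).1⟩, fun y hy => hts fun i _ =>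
    hsub i ⟨(hc i).1.trans_le (hy.1 i), (hy.2 i).trans_lt (hd i).2⟩⟩

theorem Filter.Eventually.exists_openBox {n : ℕ} {P : (Fin n → R) → Prop} {b : Fin n → R}
    (h : ∀ᶠ x in 𝓝 b, P x) : ∃ U, OpenBox U ∧ b ∈ U ∧ ∀ x ∈ U, P x := by
  obtain ⟨c, d, hcd, hsub⟩ := exists_Icc_subset_of_mem_nhds_pi h
  exact ⟨_, ⟨c, d, rfl⟩, hcd, fun x hx => hsub ⟨fun i => (hx i).1.le, fun i => (hx i).2.le⟩⟩

theorem Filter.Eventually.exists_Icc_forall_append {m k : ℕ} {P : (Fin (m + k) → R) → Prop}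
    {b : Fin m → R} {a : Fin k → R} (h : ∀ᶠ z in 𝓝 (Fin.append b a), P z) :
    ∃ c d : Fin k → R, Icc c d ∈ 𝓝 a ∧ ∀ᶠ x in 𝓝 b, ∀ y ∈ Icc c d, P (Fin.append x y) := by
  have h' := (Fin.continuous_append m k).continuousAt (x := (b, a)) |>.eventually h
  rw [nhds_prod_eq, Filter.eventually_prod_iff] at h'
  obtain ⟨Pb, hPb, Pa, hPa, hP⟩ := h'
  obtain ⟨c, d, hcd, hsub⟩ := exists_Icc_subset_of_mem_nhds_pi hPa
  exact ⟨c, d, pi_Icc_mem_nhds (fun i => (hcd i).1) (fun i => (hcd i).2),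
    hPb.mono fun x hx y hy => hP hx (hsub hy)⟩

end Boxes

section Projection
variable {R : Type*} {L : FirstOrder.Language} [L.Structure R] [LinearOrder R]
  [TopologicalSpace R] [OrderTopology R] [NoMaxOrder R] [NoMinOrder R]

theorem definable₁_setOf_mem_closure_init (hlt : IsDefinable L {v : Fin 2 → R | v 0 < v 1})
    {k : ℕ} {S : Set (Fin (k + 1) → R)} (hS : IsDefinable L S) (z : Fin k → R) :
    univ.Definable₁ L {u | z ∈ closure (Fin.init '' (S ∩ {w | u ≤ w (Fin.last k)}))} := by
  have hconst : ∀ (α : Type) (a : R), univ.DefinableFun L fun _ : α → R => a :=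
    fun α a => L.definableFun_const α (mem_univ a)
  have h3 : univ.Definable L ({x : ((Fin 1 ⊕ Fin k) ⊕ Fin k) ⊕ Fin (k + 1) → R |
      x ∘ Sum.inr ∈ S} ∩ {x | x (.inl (.inl (.inl 0))) ≤ x (.inr (Fin.last k))} ∩
      ⋂ i, ({x | x (.inl (.inl (.inr i))) < x (.inr i.castSucc)} ∩
        {x | x (.inr i.castSucc) < x (.inl (.inr i))})) :=
    ((hS.preimage_comp _).inter (.setOf_le hlt (DefinableFun.proj L) (DefinableFun.proj L))).inter
      (definable_iInter_of_finite fun i => (Definable.setOf_lt hlt (DefinableFun.proj L)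
        (DefinableFun.proj L)).inter (.setOf_lt hlt (DefinableFun.proj L) (DefinableFun.proj L)))
  have h2 : univ.Definable L ((⋂ i, ({y : (Fin 1 ⊕ Fin k) ⊕ Fin k → R |
      y (.inl (.inr i)) < z i} ∩ {y | z i < y (.inr i)}))ᶜ ∪ {y | ∃ w, Sum.elim y w ∈ _}) :=
    (definable_iInter_of_finite fun i => (Definable.setOf_lt hlt (DefinableFun.proj L)
      (hconst _ _)).inter (.setOf_lt hlt (hconst _ _) (DefinableFun.proj L))).compl.union
      h3.exists_of_finite
  unfold Definable₁
  convert h2.forall_of_finite.forall_of_finite using 1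
  ext v
  simp only [mem_closure_iff_forall_pi_Ioo, mem_ofPred_eq, mem_union, mem_compl_iff, mem_iInter,
    mem_inter_iff, Sum.elim_inl, Sum.elim_inr, Sum.elim_comp_inr, mem_univ_pi, mem_Ioo,
    Set.Nonempty, mem_image, exists_exists_and_eq_and, imp_iff_not_or, Fin.init]

theorem exists_snoc_mem_closure (hlt : IsDefinable L {v : Fin 2 → R | v 0 < v 1})
    (hDC : DCProp L R) {k : ℕ} {S : Set (Fin (k + 1) → R)} (hS : IsDefinable L S) {p q : R}
    (hbdd : ∀ w ∈ S, w (Fin.last k) ∈ Icc p q) {z : Fin k → R}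
    (hz : z ∈ closure (Fin.init '' S)) : ∃ t, Fin.snoc z t ∈ closure S := by
  set B := {u | z ∈ closure (Fin.init '' (S ∩ {w | u ≤ w (Fin.last k)}))}
  have hpB : p ∈ B := by
    have hSp : S ∩ {w | p ≤ w (Fin.last k)} = S := inter_eq_left.2 fun w hw => (hbdd w hw).1
    rwa [mem_ofPred_eq, hSp]
  have hBq : q ∈ upperBounds B := fun u hu => by
    obtain ⟨_, w, ⟨hwS, huw⟩, rfl⟩ := closure_nonempty_iff.1 ⟨z, hu⟩
    exact huw.trans (hbdd w hwS).2
  obtain ⟨t, ht⟩ := hDC B (definable₁_setOf_mem_closure_init hlt hS z) ⟨p, hpB⟩ ⟨q, hBq⟩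
  refine ⟨t, mem_closure_iff_nhds.2 fun U hU => ?_⟩
  obtain ⟨V, hV, e, f, het, htf, hVU⟩ := exists_snoc_mem_of_mem_nhds hU
  obtain ⟨V', hV', hV'f⟩ : ∃ V' ∈ 𝓝 z,
      V' ∩ Fin.init '' (S ∩ {w | f ≤ w (Fin.last k)}) = ∅ := by
    have hfB : f ∉ B := fun hf => not_le.2 htf (ht.1 hf)
    simpa [B, mem_closure_iff_nhds, not_nonempty_iff_eq_empty] using hfB
  obtain ⟨u, huB, heu, -⟩ := ht.exists_between het
  obtain ⟨_, ⟨hyV, hyV'⟩, w, ⟨hwS, huw⟩, rfl⟩ :=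
    mem_closure_iff_nhds.1 huB _ (Filter.inter_mem hV hV')
  have hwf : w (Fin.last k) < f := not_le.1 fun hfw =>
    (eq_empty_iff_forall_notMem.1 hV'f) _ ⟨hyV', w, ⟨hwS, hfw⟩, rfl⟩
  refine ⟨w, ?_, hwS⟩
  rw [← Fin.snoc_init_self w]
  exact hVU _ hyV _ ⟨heu.trans_le huw, hwf⟩

theorem isClosed_image_init (hlt : IsDefinable L {v : Fin 2 → R | v 0 < v 1})
    (hDC : DCProp L R) {k : ℕ} {F : Set (Fin (k + 1) → R)} (hF : IsDefinable L F)
    (hcl : IsClosed F) {p q : R} (hbdd : ∀ w ∈ F, w (Fin.last k) ∈ Icc p q) :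
    IsClosed (Fin.init '' F) := by
  refine closure_subset_iff_isClosed.1 fun z hz => ?_
  obtain ⟨t, ht⟩ := exists_snoc_mem_closure hlt hDC hF hbdd hz
  exact ⟨_, hcl.closure_subset ht, Fin.init_snoc _ _⟩

theorem discreteSet_image_init (hlt : IsDefinable L {v : Fin 2 → R | v 0 < v 1})
    (hDC : DCProp L R) {k : ℕ} {F : Set (Fin (k + 1) → R)} (hF : IsDefinable L F)
    (hcl : IsClosed F) (hd : DiscreteSet F) {p q : R}
    (hbdd : ∀ w ∈ F, w (Fin.last k) ∈ Icc p q) : DiscreteSet (Fin.init '' F) := by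
  rw [discreteSet_iff_notMem_closure_diff] at hd ⊢
  rintro _ ⟨w, hwF, rfl⟩ hw
  set y := Fin.init w
  have hy : IsDefinable L (Fin.init ⁻¹' {y} : Set (Fin (k + 1) → R)) := by
    have : univ.Definable L ({y} : Set (Fin k → R)) := by
      convert definable_iInter_of_finite fun i =>
        (DefinableFun.proj L (i := i)).ofPred_eq_const (mem_univ (y i)) using 1
      ext v
      simp [funext_iff]
    exact this.preimage_comp Fin.castSucc
  obtain ⟨t, ht⟩ := exists_snoc_mem_closure hlt hDC (hF.sdiff hy)
    (fun w hw => hbdd w hw.1) (by rwa [image_sdiff_preimage])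
  refine hd _ (hcl.closure_subset (closure_mono sdiff_subset ht)) (closure_mono ?_ ht)
  rintro w' ⟨hw'F, hw'y⟩
  refine ⟨hw'F, fun h => hw'y ?_⟩
  rw [mem_singleton_iff.1 h, mem_preimage, Fin.init_snoc, mem_singleton_iff]

end Projection

section Shadow
variable {R : Type*} {L : FirstOrder.Language} [L.Structure R] [LinearOrder R]

def shadow {m k : ℕ} (X : Set (Fin (m + (k + 1)) → R)) (c d : Fin (k + 1) → R) :
    Set (Fin (m + k) → R) :=
  Fin.init '' (X ∩ (· ∘ Fin.natAdd m) ⁻¹' Icc c d)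

theorem fiberN_shadow {m k : ℕ} (X : Set (Fin (m + (k + 1)) → R)) (c d : Fin (k + 1) → R)
    (x : Fin m → R) : fiberN (shadow X c d) x = Fin.init '' (fiberN X x ∩ Icc c d) := by
  ext y
  simp only [fiberN, shadow, mem_ofPred_eq, mem_image, mem_inter_iff, mem_preimage]
  have happend : ∀ w : Fin (k + 1) → R, Fin.append x w ∘ Fin.natAdd m = w :=
    fun w => funext (Fin.append_right x w)
  constructor
  · rintro ⟨w, ⟨hwX, hwcd⟩, hw⟩
    have hw' : w = Fin.append x (Fin.snoc y (w (Fin.last _))) := by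
      rw [Fin.append_snoc, ← hw, Fin.snoc_init_self]
    rw [hw', happend] at hwcd
    exact ⟨_, ⟨hw' ▸ hwX, hwcd⟩, Fin.init_snoc _ _⟩
  · rintro ⟨w, ⟨hwX, hwcd⟩, rfl⟩
    refine ⟨_, ⟨hwX, (happend w).symm ▸ hwcd⟩, ?_⟩
    conv_lhs => rw [← Fin.snoc_init_self w, Fin.append_snoc, Fin.init_snoc]

theorem isDefinable_shadow (hlt : IsDefinable L {v : Fin 2 → R | v 0 < v 1}) {m k : ℕ}
    {X : Set (Fin (m + (k + 1)) → R)} (hX : IsDefinable L X) (c d : Fin (k + 1) → R) :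
    IsDefinable L (shadow X c d) :=
  (Definable.inter hX ((definable_Icc hlt c d).preimage_comp (Fin.natAdd m))).image_comp
    Fin.castSucc

theorem finite_fiberN_inter_Icc_snoc {m k : ℕ} {X : Set (Fin (m + (k + 1)) → R)}
    {x : Fin m → R} {c₁ d₁ c₂ d₂ : Fin k → R} {p q : R}
    (hshadow : (fiberN (shadow X (Fin.snoc c₁ p) (Fin.snoc d₁ q)) x ∩ Icc c₂ d₂).Finite)
    (hslice : ∀ y ∈ Icc c₁ d₁, (fiber1 X (Fin.append x y) ∩ Icc p q).Finite) :
    (fiberN X x ∩ Icc (Fin.snoc (c₁ ⊔ c₂) p) (Fin.snoc (d₁ ⊓ d₂) q)).Finite := by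
  refine Finite.of_finite_fibers Fin.init (hshadow.subset ?_) fun y hy => ?_
  · rintro _ ⟨w, ⟨hwX, hw⟩, rfl⟩
    rw [Fin.mem_Icc_snoc_iff, ← Icc_inter_Icc] at hw
    refine ⟨?_, hw.1.2⟩
    rw [fiberN_shadow]
    exact ⟨w, ⟨hwX, Fin.mem_Icc_snoc_iff.2 ⟨hw.1.1, hw.2⟩⟩, rfl⟩
  · obtain ⟨w, ⟨-, hw⟩, rfl⟩ := hy
    rw [Fin.mem_Icc_snoc_iff, ← Icc_inter_Icc] at hw
    refine ((hslice _ hw.1.1).image (Fin.snoc (Fin.init w))).subset ?_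
    rintro w' ⟨⟨hw'X, hw'⟩, hw'w : Fin.init w' = Fin.init w⟩
    have hw'snoc : Fin.snoc (Fin.init w) (w' (Fin.last k)) = w' := by
      rw [← hw'w, Fin.snoc_init_self]
    refine ⟨w' (Fin.last k), ⟨?_, (Fin.mem_Icc_snoc_iff.1 hw').2⟩, hw'snoc⟩
    rwa [fiber1_append, mem_preimage, hw'snoc]

variable [TopologicalSpace R] [OrderTopology R] [NoMaxOrder R] [NoMinOrder R]

theorem isClosed_and_discreteSet_fiberN_shadow
    (hlt : IsDefinable L {v : Fin 2 → R | v 0 < v 1}) (hDC : DCProp L R) {m k : ℕ}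
    {X : Set (Fin (m + (k + 1)) → R)} (hX : IsDefinable L X)
    (hfib : ∀ x, IsClosed (fiberN X x) ∧ DiscreteSet (fiberN X x)) (c d : Fin (k + 1) → R)
    (x : Fin m → R) :
    IsClosed (fiberN (shadow X c d) x) ∧ DiscreteSet (fiberN (shadow X c d) x) := by
  rw [fiberN_shadow]
  have hF : IsDefinable L (fiberN X x ∩ Icc c d) :=
    Definable.inter (isDefinable_fiberN hX x) (definable_Icc hlt c d)
  have hcl : IsClosed (fiberN X x ∩ Icc c d) := (hfib x).1.inter isClosed_Icc
  have hbdd : ∀ w ∈ fiberN X x ∩ Icc c d,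
      w (Fin.last k) ∈ Icc (c (Fin.last k)) (d (Fin.last k)) :=
    fun w hw => ⟨hw.2.1 _, hw.2.2 _⟩
  exact ⟨isClosed_image_init hlt hDC hF hcl hbdd,
    discreteSet_image_init hlt hDC hF hcl ((hfib x).2.mono inter_subset_left) hbdd⟩

end Shadow

section LocallyUniformFiniteness
variable {R : Type*} {L : FirstOrder.Language} [L.Structure R] [LinearOrder R]
  [TopologicalSpace R]

theorem LUF2.exists_lt_and_exists_gt (hLUF2 : LUF2 L R) (x : R) :
    (∃ c, c < x) ∧ ∃ d, x < d := by
  obtain ⟨-, -, -, -, -, U, ⟨c, d, rfl⟩, hxU, -⟩ :=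
    hLUF2 1 univ definable_univ x fun _ => x
  exact ⟨⟨c 0, (hxU 0).1⟩, ⟨d 0, (hxU 0).2⟩⟩

variable [OrderTopology R] [DenselyOrdered R] [NoMaxOrder R] [NoMinOrder R]

theorem LUF2.exists_Icc_eventually_finite (hLUF2 : LUF2 L R)
    (hlt : IsDefinable L {v : Fin 2 → R | v 0 < v 1}) (hDC : DCProp L R) {M : ℕ}
    {X : Set (Fin (M + 1) → R)} (hX : IsDefinable L X)
    (hfib : ∀ z, IsClosed (fiber1 X z) ∧ DiscreteSet (fiber1 X z)) (α : R) (b : Fin M → R) :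
    ∃ p q, Icc p q ∈ 𝓝 α ∧ ∀ᶠ z in 𝓝 b, (fiber1 X z ∩ Icc p q).Finite := by
  obtain ⟨N, -, p, q, hα, U, hU, hbU, hN⟩ := hLUF2 M X hX α b
  exact ⟨p, q, mem_interior_iff_mem_nhds.1 hα, Filter.mem_of_superset (hU.isOpen.mem_nhds hbU)
    fun z hz => finite_inter_Icc_of_infinite_or_ncard_le hlt hDC (definable₁_fiber1 hX z)
      (hfib z).1 (hfib z).2 hα (hN z hz)⟩

theorem LUF1.exists_Icc_forall_finite (hLUF1 : LUF1 L R)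
    (hlt : IsDefinable L {v : Fin 2 → R | v 0 < v 1}) (hDC : DCProp L R) {M : ℕ}
    {X : Set (Fin (M + 1) → R)} (hX : IsDefinable L X)
    (hfib : ∀ z, IsClosed (fiber1 X z) ∧ DiscreteSet (fiber1 X z)) (α : R) :
    ∃ p q, Icc p q ∈ 𝓝 α ∧ ∀ z, (fiber1 X z ∩ Icc p q).Finite := by
  obtain ⟨N, -, p, q, hα, hN⟩ := hLUF1 M X hX α
  exact ⟨p, q, mem_interior_iff_mem_nhds.1 hα, fun z => finite_inter_Icc_of_infinite_or_ncard_le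
    hlt hDC (definable₁_fiber1 hX z) (hfib z).1 (hfib z).2 hα (hN z)⟩

theorem SLUF.exists_Icc_forall_finite (hSLUF : SLUF L R)
    (hlt : IsDefinable L {v : Fin 2 → R | v 0 < v 1}) (hDC : DCProp L R) (α : R) :
    ∃ p q, Icc p q ∈ 𝓝 α ∧ ∀ (M : ℕ) (X : Set (Fin (M + 1) → R)), IsDefinable L X →
      (∀ z, IsClosed (fiber1 X z) ∧ DiscreteSet (fiber1 X z)) →
      ∀ z, (fiber1 X z ∩ Icc p q).Finite := by
  obtain ⟨p, q, hα, hN⟩ := hSLUF α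
  refine ⟨p, q, mem_interior_iff_mem_nhds.1 hα, fun M X hX hfib z => ?_⟩
  obtain ⟨N, -, hN⟩ := hN M X hX
  exact finite_inter_Icc_of_infinite_or_ncard_le hlt hDC (definable₁_fiber1 hX z)
    (hfib z).1 (hfib z).2 hα (hN z)

theorem LUF2.exists_Icc_eventually_finite_fiberN (hLUF2 : LUF2 L R)
    (hlt : IsDefinable L {v : Fin 2 → R | v 0 < v 1}) (hDC : DCProp L R) :
    ∀ (n m : ℕ) (X : Set (Fin (m + n) → R)), IsDefinable L X →
      (∀ x, IsClosed (fiberN X x) ∧ DiscreteSet (fiberN X x)) → ∀ b a,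
      ∃ c d : Fin n → R, Icc c d ∈ 𝓝 a ∧ ∀ᶠ x in 𝓝 b, (fiberN X x ∩ Icc c d).Finite
  | 0, _, _, _, _, _, a => ⟨a, a, pi_Icc_mem_nhds finZeroElim finZeroElim,
      .of_forall fun _ => subsingleton_of_subsingleton.finite⟩
  | k + 1, m, X, hX, hfib, b, a => by
    obtain ⟨p, q, hpq, hslice⟩ := hLUF2.exists_Icc_eventually_finite hlt hDC hX
      (isClosed_and_discreteSet_fiber1 hfib) (a (Fin.last k)) (Fin.append b (Fin.init a))
    obtain ⟨c₁, d₁, hcd₁, hslice⟩ := hslice.exists_Icc_forall_append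
    obtain ⟨c₂, d₂, hcd₂, hshadow⟩ := hLUF2.exists_Icc_eventually_finite_fiberN hlt hDC k m
      (shadow X (Fin.snoc c₁ p) (Fin.snoc d₁ q)) (isDefinable_shadow hlt hX _ _)
      (isClosed_and_discreteSet_fiberN_shadow hlt hDC hX hfib _ _) b (Fin.init a)
    exact ⟨_, _, Icc_snoc_sup_snoc_inf_mem_nhds hcd₁ hcd₂ hpq,
      (hshadow.and hslice).mono fun x hx => finite_fiberN_inter_Icc_snoc hx.1 hx.2⟩

theorem LUF1.exists_Icc_forall_finite_fiberN (hLUF1 : LUF1 L R)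
    (hlt : IsDefinable L {v : Fin 2 → R | v 0 < v 1}) (hDC : DCProp L R) :
    ∀ (n m : ℕ) (X : Set (Fin (m + n) → R)), IsDefinable L X →
      (∀ x, IsClosed (fiberN X x) ∧ DiscreteSet (fiberN X x)) → ∀ a,
      ∃ c d : Fin n → R, Icc c d ∈ 𝓝 a ∧ ∀ x, (fiberN X x ∩ Icc c d).Finite
  | 0, _, _, _, _, a => ⟨a, a, pi_Icc_mem_nhds finZeroElim finZeroElim,
      fun _ => subsingleton_of_subsingleton.finite⟩
  | k + 1, m, X, hX, hfib, a => by
    obtain ⟨p, q, hpq, hslice⟩ := hLUF1.exists_Icc_forall_finite hlt hDC hX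
      (isClosed_and_discreteSet_fiber1 hfib) (a (Fin.last k))
    obtain ⟨c₁, d₁, hcd₁⟩ := exists_Icc_mem_nhds_pi (Fin.init a)
    obtain ⟨c₂, d₂, hcd₂, hshadow⟩ := hLUF1.exists_Icc_forall_finite_fiberN hlt hDC k m
      (shadow X (Fin.snoc c₁ p) (Fin.snoc d₁ q)) (isDefinable_shadow hlt hX _ _)
      (isClosed_and_discreteSet_fiberN_shadow hlt hDC hX hfib _ _) (Fin.init a)
    exact ⟨_, _, Icc_snoc_sup_snoc_inf_mem_nhds hcd₁ hcd₂ hpq,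
      fun x => finite_fiberN_inter_Icc_snoc (hshadow x) fun y _ => hslice _⟩

theorem SLUF.exists_Icc_forall_finite_fiberN (hSLUF : SLUF L R)
    (hlt : IsDefinable L {v : Fin 2 → R | v 0 < v 1}) (hDC : DCProp L R) :
    ∀ (n : ℕ) (a : Fin n → R), ∃ c d : Fin n → R, Icc c d ∈ 𝓝 a ∧
      ∀ (m : ℕ) (X : Set (Fin (m + n) → R)), IsDefinable L X →
        (∀ x, IsClosed (fiberN X x) ∧ DiscreteSet (fiberN X x)) →
        ∀ x, (fiberN X x ∩ Icc c d).Finite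
  | 0, a => ⟨a, a, pi_Icc_mem_nhds finZeroElim finZeroElim,
      fun _ _ _ _ _ => subsingleton_of_subsingleton.finite⟩
  | k + 1, a => by
    obtain ⟨p, q, hpq, hslice⟩ := hSLUF.exists_Icc_forall_finite hlt hDC (a (Fin.last k))
    obtain ⟨c₁, d₁, hcd₁⟩ := exists_Icc_mem_nhds_pi (Fin.init a)
    obtain ⟨c₂, d₂, hcd₂, hshadow⟩ := hSLUF.exists_Icc_forall_finite_fiberN hlt hDC k (Fin.init a)
    exact ⟨_, _, Icc_snoc_sup_snoc_inf_mem_nhds hcd₁ hcd₂ hpq, fun m X hX hfib x =>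
      finite_fiberN_inter_Icc_snoc (hshadow m _ (isDefinable_shadow hlt hX _ _)
        (isClosed_and_discreteSet_fiberN_shadow hlt hDC hX hfib _ _) x)
      fun y _ => hslice _ X hX (isClosed_and_discreteSet_fiber1 hfib) _⟩

end LocallyUniformFiniteness

theorem closed_discrete_fibers_locally_uniformly_finite_general
    {R : Type*} (L : FirstOrder.Language) [L.Structure R]
    [LinearOrder R] [DenselyOrdered R] [TopologicalSpace R] [OrderTopology R]
    (hlt : IsDefinable L {v : Fin 2 → R | v 0 < v 1})
    (hDC : DCProp L R) (hLUF2 : LUF2 L R) :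
    (∀ (m n : ℕ) (X : Set (Fin (m + n) → R)), IsDefinable L X →
      (∀ x : Fin m → R, IsClosed (fiberN X x) ∧ DiscreteSet (fiberN X x)) →
      ∀ (b : Fin m → R) (a : Fin n → R),
        ∃ B : Set (Fin n → R), ClosedBox B ∧ a ∈ interior B ∧
          ∃ U : Set (Fin m → R), OpenBox U ∧ b ∈ U ∧
            ∀ x ∈ U, (fiberN X x ∩ B).Finite) ∧
    (LUF1 L R → ∀ (m n : ℕ) (X : Set (Fin (m + n) → R)), IsDefinable L X →
      (∀ x : Fin m → R, IsClosed (fiberN X x) ∧ DiscreteSet (fiberN X x)) →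
      ∀ a : Fin n → R,
        ∃ B : Set (Fin n → R), ClosedBox B ∧ a ∈ interior B ∧
          ∀ x : Fin m → R, (fiberN X x ∩ B).Finite) ∧
    (SLUF L R → ∀ (n : ℕ) (a : Fin n → R),
      ∃ B : Set (Fin n → R), ClosedBox B ∧ a ∈ interior B ∧
        ∀ (m : ℕ) (X : Set (Fin (m + n) → R)), IsDefinable L X →
          (∀ x : Fin m → R, IsClosed (fiberN X x) ∧ DiscreteSet (fiberN X x)) →
          ∀ x : Fin m → R, (fiberN X x ∩ B).Finite) := by
  have : NoMaxOrder R := ⟨fun x => (hLUF2.exists_lt_and_exists_gt x).2⟩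
  have : NoMinOrder R := ⟨fun x => (hLUF2.exists_lt_and_exists_gt x).1⟩
  refine ⟨fun m n X hX hfib b a => ?_, fun hLUF1 m n X hX hfib a => ?_, fun hSLUF n a => ?_⟩
  · obtain ⟨c, d, hcd, hfin⟩ := hLUF2.exists_Icc_eventually_finite_fiberN hlt hDC n m X hX hfib b a
    obtain ⟨U, hU, hbU, hUfin⟩ := hfin.exists_openBox
    exact ⟨_, closedBox_Icc c d, mem_interior_iff_mem_nhds.2 hcd, U, hU, hbU, hUfin⟩
  · obtain ⟨c, d, hcd, hfin⟩ := hLUF1.exists_Icc_forall_finite_fiberN hlt hDC n m X hX hfib a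
    exact ⟨_, closedBox_Icc c d, mem_interior_iff_mem_nhds.2 hcd, hfin⟩
  · obtain ⟨c, d, hcd, hfin⟩ := hSLUF.exists_Icc_forall_finite_fiberN hlt hDC n a
    exact ⟨_, closedBox_Icc c d, mem_interior_iff_mem_nhds.2 hcd, hfin⟩

/-- (Fibers which are closed and discrete are uniformly locally finite,
with the `LUF₁` and `SLUF` refinements.) Let `𝓡` be a definably complete expansion of a
densely linearly ordered abelian group satisfying `LUF₂`, and let `X ⊆ R^{m+n}` be
definable with every fiber `X_x` closed and discrete. For every `(b,a) ∈ R^m × R^n`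
there are a closed box `B ⊆ R^n` with `a ∈ int(B)` and an open box `U ∋ b` such that
`X_x ∩ B` is finite for every `x ∈ U`. Moreover `U` can be taken to be `R^m` if
`𝓡 ⊨ LUF₁`, and `B` can be taken independently of `X` if `𝓡 ⊨ SLUF`. -/
theorem closed_discrete_fibers_locally_uniformly_finite
    {R : Type*} (L : FirstOrder.Language) [L.Structure R]
    [LinearOrder R] [DenselyOrdered R] [AddCommGroup R]
    [CovariantClass R R (· + ·) (· < ·)] [TopologicalSpace R] [OrderTopology R]
    (hlt : IsDefinable L {v : Fin 2 → R | v 0 < v 1})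
    (hadd : IsDefinable L {v : Fin 3 → R | v 0 + v 1 = v 2})
    (hDC : DCProp L R) (hLUF2 : LUF2 L R) :
    (∀ (m n : ℕ) (X : Set (Fin (m + n) → R)), IsDefinable L X →
      (∀ x : Fin m → R, IsClosed (fiberN X x) ∧ DiscreteSet (fiberN X x)) →
      ∀ (b : Fin m → R) (a : Fin n → R),
        ∃ B : Set (Fin n → R), ClosedBox B ∧ a ∈ interior B ∧
          ∃ U : Set (Fin m → R), OpenBox U ∧ b ∈ U ∧
            ∀ x ∈ U, (fiberN X x ∩ B).Finite) ∧
    (LUF1 L R → ∀ (m n : ℕ) (X : Set (Fin (m + n) → R)), IsDefinable L X →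
      (∀ x : Fin m → R, IsClosed (fiberN X x) ∧ DiscreteSet (fiberN X x)) →
      ∀ a : Fin n → R,
        ∃ B : Set (Fin n → R), ClosedBox B ∧ a ∈ interior B ∧
          ∀ x : Fin m → R, (fiberN X x ∩ B).Finite) ∧
    (SLUF L R → ∀ (n : ℕ) (a : Fin n → R),
      ∃ B : Set (Fin n → R), ClosedBox B ∧ a ∈ interior B ∧
        ∀ (m : ℕ) (X : Set (Fin (m + n) → R)), IsDefinable L X →
          (∀ x : Fin m → R, IsClosed (fiberN X x) ∧ DiscreteSet (fiberN X x)) →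
          ∀ x : Fin m → R, (fiberN X x ∩ B).Finite) :=
  closed_discrete_fibers_locally_uniformly_finite_general L hlt hDC hLUF2
end
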